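/- arXiv:1108.5751 — 13 statements merged into one kernel-verified Lean document; each statement's English description precedes it below -/
import Mathlib

section
/- Let 𝒜 be an epireflective class of topological spaces in which every member is a T0 space, and let ℬ be an AD-class in 𝒜. If ℬ is closed under prime factors (i.e., X_a ∈ ℬ for every X ∈ ℬ and every point a ∈ X), then ℬ is hereditary: every nonempty subspace of every member of ℬ belongs to ℬ. -/
/-!
For `s ⊆ X`, the subspace `s` is a quotient of the topological sum of the prime factors `X_a`,
`a ∈ s`, under the map sending `x` in the summand of `a` to `x` if `x ∈ s` and to `a` otherwise.
On the summand `X_a` this map is continuous because only `a` fails to be isolated, and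
`a ∈ s` is sent to itself; conversely, if the preimage of `U ⊆ s` is open then for each `a ∈ U`
the summand of `a` provides a neighbourhood `V` of `a` in `X` with `V ∩ s ⊆ U`, so `U` is open.
Since `s ∈ 𝒜` and each `X_a ∈ ℬ`, closure of `ℬ` under sums and divisibility give `s ∈ ℬ`.
-/

open Topology

universe u v w

/-- A class of topological spaces (underlying types in a fixed universe). -/
def SpaceClass : Type (u + 1) :=
  ∀ (X : Type u), TopologicalSpace X → Prop

/-- Closedness under homeomorphic copies. -/
def ClosedUnderHomeo (ℬ : SpaceClass.{u}) : Prop :=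
  ∀ (X Y : Type u) (tX : TopologicalSpace X) (tY : TopologicalSpace Y),
    Nonempty (@Homeomorph X Y tX tY) → ℬ X tX → ℬ Y tY

/-- An epireflective class: closed under homeomorphic copies, subspaces and
set-indexed topological products. -/
structure IsEpireflectiveClass (𝒜 : SpaceClass.{u}) : Prop where
  homeo : ClosedUnderHomeo 𝒜
  subspace : ∀ (X : Type u) (tX : TopologicalSpace X) (s : Set X),
    𝒜 X tX → 𝒜 s (TopologicalSpace.induced (Subtype.val : s → X) tX)
  prod : ∀ (ι : Type u) (Y : ι → Type u) (t : ∀ i, TopologicalSpace (Y i)),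
    (∀ i, 𝒜 (Y i) (t i)) → 𝒜 (∀ i, Y i) (@Pi.topologicalSpace ι Y t)

/-- The disjoint-union (topological sum) topology on a sigma type. -/
def sigmaTop {ι : Type v} (Y : ι → Type w) (t : ∀ i, TopologicalSpace (Y i)) :
    TopologicalSpace (Σ i, Y i) :=
  ⨆ i, TopologicalSpace.coinduced (Sigma.mk i) (t i)

/-- An AD-class in `𝒜`: a subclass of `𝒜` closed under homeomorphic copies, closed
under topological sums of arbitrary families of its members, and divisible in `𝒜`
(quotients in `𝒜` of members of `ℬ` belong to `ℬ`). -/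
structure IsADClass (𝒜 ℬ : SpaceClass.{u}) : Prop where
  subset : ∀ (X : Type u) (tX : TopologicalSpace X), ℬ X tX → 𝒜 X tX
  homeo : ClosedUnderHomeo ℬ
  sums : ∀ (ι : Type u) (Y : ι → Type u) (t : ∀ i, TopologicalSpace (Y i)),
    (∀ i, ℬ (Y i) (t i)) → ℬ (Σ i, Y i) (sigmaTop Y t)
  divisible : ∀ (X Z : Type u) (tX : TopologicalSpace X) (tZ : TopologicalSpace Z)
    (q : X → Z), ℬ X tX → 𝒜 Z tZ → @IsQuotientMap X Z tX tZ q → ℬ Z tZ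

/-- A class is hereditary if every nonempty subspace of each member belongs to it. -/
def IsHereditary (ℬ : SpaceClass.{u}) : Prop :=
  ∀ (X : Type u) (tX : TopologicalSpace X) (s : Set X), s.Nonempty → ℬ X tX →
    ℬ s (TopologicalSpace.induced (Subtype.val : s → X) tX)

/-- The prime factor `X_a`: the topology on the underlying set of `X` whose open sets
are exactly the sets `U` such that `a ∈ U` implies `U` is a neighbourhood of `a`. -/
def primeFactor {X : Type u} (t : TopologicalSpace X) (a : X) : TopologicalSpace X where
  IsOpen U := a ∈ U → U ∈ @nhds X t a
  isOpen_univ := fun _ => Filter.univ_mem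
  isOpen_inter := fun U V hU hV h => Filter.inter_mem (hU h.1) (hV h.2)
  isOpen_sUnion := fun S hS h => by
    obtain ⟨U, hU, haU⟩ := h
    exact Filter.mem_of_superset (hS U hU haU) (Set.subset_sUnion_of_mem hU)

/-- A prime space: a topological space with exactly one non-isolated point. -/
def IsPrimeSpace (X : Type u) (t : TopologicalSpace X) : Prop :=
  ∃! a : X, ¬ @IsOpen X t {a}

section RetractOntoSubset

variable {X : Type u} (s : Set X)

open Classical in
noncomputable def retractOntoSubset (p : Σ _ : s, X) : s :=
  if h : p.2 ∈ s then ⟨p.2, h⟩ else p.1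

lemma retractOntoSubset_of_mem (a : s) {x : X} (hx : x ∈ s) :
    retractOntoSubset s ⟨a, x⟩ = ⟨x, hx⟩ :=
  dif_pos hx

lemma retractOntoSubset_of_notMem (a : s) {x : X} (hx : x ∉ s) :
    retractOntoSubset s ⟨a, x⟩ = a :=
  dif_neg hx

lemma val_retractOntoSubset_mem {a : s} {x : X} {V : Set X} (ha : (a : X) ∈ V) (hx : x ∈ V) :
    (retractOntoSubset s ⟨a, x⟩ : X) ∈ V := by
  by_cases hxs : x ∈ s
  · rwa [retractOntoSubset_of_mem s a hxs]
  · rwa [retractOntoSubset_of_notMem s a hxs]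

variable [tX : TopologicalSpace X]

lemma continuous_retractOntoSubset_mk (a : s) :
    Continuous[primeFactor tX a, _] fun x => retractOntoSubset s ⟨a, x⟩ := by
  refine continuous_def.2 fun U hU ha => ?_
  obtain ⟨V, hV, rfl⟩ := isOpen_induced_iff.1 hU
  have haV : (a : X) ∈ V := by
    rwa [Set.mem_preimage, retractOntoSubset_of_mem s a a.2] at ha
  exact Filter.mem_of_superset (hV.mem_nhds haV) fun x => val_retractOntoSubset_mem s haV

/- `sigmaTop` unfolds to Mathlib's sigma topology, which is why the `Sigma` API applies; the
explicit `@`s stop instance search from putting `tX` on every summand instead of `X_a`. -/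
lemma isQuotientMap_retractOntoSubset :
    @IsQuotientMap _ _ (sigmaTop (fun _ => X) fun a : s => primeFactor tX a) _
      (retractOntoSubset s) := by
  refine @IsQuotientMap.mk _ _ (_) _ _
    (@IsCoinducing.of_isOpen_preimage_iff_isOpen _ _ _ (_) _ fun U =>
      ⟨fun hU => ?isOpen_of_preimage, fun hU => ?isOpen_preimage⟩)
    fun b => ⟨⟨b, b⟩, retractOntoSubset_of_mem s b b.2⟩
  case isOpen_of_preimage =>
    have hU_summand := (@isOpen_sigma_iff s (fun _ => X) (fun a => primeFactor tX a) _).1 hU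
    refine isOpen_iff_mem_nhds.2 fun a ha => (mem_nhds_subtype s a U).2
      ⟨_, hU_summand a ?_, fun x hx => ?_⟩
    · rwa [Set.mem_preimage, Set.mem_preimage, retractOntoSubset_of_mem s a a.2]
    · simpa only [Set.mem_preimage, retractOntoSubset_of_mem s a x.2] using hx
  case isOpen_preimage =>
    have hcont := (@continuous_sigma_iff _ s (fun _ => X) (fun a => primeFactor tX a) _ _).2
      (continuous_retractOntoSubset_mk s)
    exact @Continuous.isOpen_preimage _ _ (_) _ _ hcont U hU

end RetractOntoSubset

theorem statement0_general (𝒜 ℬ : SpaceClass.{u})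
    (hA : IsEpireflectiveClass 𝒜)
    (hB : IsADClass 𝒜 ℬ)
    (hPF : ∀ (X : Type u) (tX : TopologicalSpace X) (a : X),
      ℬ X tX → ℬ X (primeFactor tX a)) :
    IsHereditary ℬ := by
  intro X tX s _ hX
  have hsum : ℬ (Σ _ : s, X) (sigmaTop (fun _ => X) fun a : s => primeFactor tX a) :=
    hB.sums s _ _ fun a => hPF X tX a hX
  have hs : 𝒜 s (TopologicalSpace.induced Subtype.val tX) :=
    hA.subspace X tX s (hB.subset X tX hX)
  exact hB.divisible _ _ _ _ _ hsum hs (isQuotientMap_retractOntoSubset s)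

/-- If an AD-class `ℬ` in an epireflective class `𝒜` of T0 spaces is
closed under prime factors, then `ℬ` is hereditary. -/
theorem statement0 (𝒜 ℬ : SpaceClass.{u})
    (hA : IsEpireflectiveClass 𝒜)
    (hT0 : ∀ (X : Type u) (tX : TopologicalSpace X), 𝒜 X tX → @T0Space X tX)
    (hB : IsADClass 𝒜 ℬ)
    (hPF : ∀ (X : Type u) (tX : TopologicalSpace X) (a : X),
      ℬ X tX → ℬ X (primeFactor tX a)) :
    IsHereditary ℬ :=
  statement0_general 𝒜 ℬ hA hB hPF
end

section
/- Let 𝒜 be an epireflective class of topological spaces in which every member is a T0 space and which contains a space with at least two points, and let ℬ be a hereditary AD-class in 𝒜. Assume that for every X ∈ ℬ there exist a space Y ∈ ℬ and a non-isolated point b ∈ Y with {b} closed in Y such that X△_bY belongs to 𝒜. Then ℬ is closed under the formation of prime factors: X_a ∈ ℬ for every X ∈ ℬ and every a ∈ X. -/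
open Topology

universe u v w

/-- The space `X △_b Y`: the final topology on `X × Y` with respect to the maps
`f : x ↦ (x, b)` and `g_a : y ↦ (a, y)`, one for each `a ∈ X`. -/
def triangleTop {X Y : Type u} (tX : TopologicalSpace X) (tY : TopologicalSpace Y)
    (b : Y) : TopologicalSpace (X × Y) :=
  TopologicalSpace.coinduced (fun x : X => (x, b)) tX ⊔
    ⨆ a : X, TopologicalSpace.coinduced (fun y : Y => (a, y)) tY

/-
`X_a` carries the initial topology of `id : X_a → X` together with, for each `x ≠ a`, a
continuous map `X_a → X` with values in `{a, x}` whose induced topology isolates `x` (T0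
separation of `x` from `a` provides it); this family separates points, so `X_a ∈ 𝒜`. The
space `X △_b Y` is a quotient of the sum of `X` and `X` copies of `Y`, hence lies in `ℬ`, and
so does its subspace `S = (X × (Y \ {b})) ∪ {(a, b)}`. Since `b` is not isolated, every open
set of `X △_b Y` through a point `(x, b)` meets `S` off the row `b`, and this makes the first
projection `S → X_a` a quotient map; divisibility then gives `X_a ∈ ℬ`.
-/

section PrimeFactor

variable {X Y : Type u} [t : TopologicalSpace X] {a : X}

theorem primeFactor_le : primeFactor t a ≤ t :=
  TopologicalSpace.le_def.2 fun _ hU ha => hU.mem_nhds ha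

theorem le_primeFactor {t' : TopologicalSpace X} (hle : t' ≤ t)
    (hsingleton : ∀ x ≠ a, IsOpen[t'] {x}) : t' ≤ primeFactor t a := by
  refine TopologicalSpace.le_def.2 fun U hU => @isOpen_iff_mem_nhds X t' U |>.2 fun x hx => ?_
  rcases eq_or_ne x a with rfl | hxa
  · exact nhds_mono hle (hU hx)
  · exact Filter.mem_of_superset (@IsOpen.mem_nhds X t' x _ (hsingleton x hxa) rfl)
      (Set.singleton_subset_iff.2 hx)

theorem continuous_primeFactor_iff [TopologicalSpace Y] {g : X → Y} :
    Continuous[primeFactor t a, _] g ↔ ContinuousAt g a := by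
  rw [continuous_def, continuousAt_def]
  constructor
  · intro h V hV
    obtain ⟨W, hWV, hW, hgW⟩ := mem_nhds_iff.1 hV
    exact Filter.mem_of_superset (h W hW hgW) (Set.preimage_mono hWV)
  · exact fun h V hV haV => h V (hV.mem_nhds haV)

theorem exists_continuous_primeFactor_isOpen_induced_singleton [T0Space X] {x : X}
    (hxa : x ≠ a) :
    ∃ h : X → X, Continuous[primeFactor t a, t] h ∧ IsOpen[t.induced h] {x} := by
  classical
  by_cases hspec : x ⤳ a
  · obtain ⟨O, hO, hxO, haO⟩ : ∃ O, IsOpen O ∧ x ∈ O ∧ a ∉ O := by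
      have : ¬a ⤳ x := fun h => hxa (hspec.antisymm h).eq
      simpa [specializes_iff_forall_open] using this
    refine ⟨fun z => if z = x then x else a, continuous_primeFactor_iff.2 ?_, O, hO, ?_⟩
    · refine continuousAt_def.2 fun V hV => ?_
      rw [if_neg hxa.symm] at hV
      have hxV : x ∈ V := mem_of_mem_nhds (hspec hV)
      refine Filter.mem_of_superset Filter.univ_mem fun z _ => ?_
      change (if z = x then x else a) ∈ V
      split_ifs
      exacts [hxV, mem_of_mem_nhds hV]
    · ext z
      by_cases hz : z = x <;> simp [hz, hxO, haO]
  · obtain ⟨W, hW, haW, hxW⟩ : ∃ W, IsOpen W ∧ a ∈ W ∧ x ∉ W := by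
      simpa [specializes_iff_forall_open] using hspec
    refine ⟨fun z => if z = x then a else x, continuous_primeFactor_iff.2 ?_, W, hW, ?_⟩
    · refine (continuousAt_const (y := x)).congr
        (Filter.mem_of_superset (hW.mem_nhds haW) fun z hz => ?_)
      exact (if_neg fun hzx : z = x => hxW (hzx ▸ hz)).symm
    · ext z
      by_cases hz : z = x <;> simp [hz, haW, hxW]

end PrimeFactor

namespace IsEpireflectiveClass

variable {𝒜 : SpaceClass.{u}}

theorem iInf_induced_mem (hA : IsEpireflectiveClass 𝒜) {ι W : Type u} {Z : ι → Type u}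
    (tZ : ∀ i, TopologicalSpace (Z i)) (hZ : ∀ i, 𝒜 (Z i) (tZ i)) (f : ∀ i, W → Z i)
    (hf : Function.Injective fun w i => f i w) :
    𝒜 W (⨅ i, (tZ i).induced (f i)) := by
  let _ : TopologicalSpace W := ⨅ i, (tZ i).induced (f i)
  have hemb : IsEmbedding fun w i => f i w := by
    refine ⟨⟨?_⟩, hf⟩
    change _ = (⨅ i, (tZ i).induced fun p : ∀ i, Z i => p i).induced _
    simp only [induced_iInf, induced_compose]
    rfl
  exact hA.homeo _ _ _ _ ⟨hemb.toHomeomorph.symm⟩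
    (hA.subspace _ _ _ (hA.prod ι Z tZ hZ))

theorem primeFactor_mem (hA : IsEpireflectiveClass 𝒜) {X : Type u} [t : TopologicalSpace X]
    [T0Space X] (hX : 𝒜 X t) (a : X) : 𝒜 X (primeFactor t a) := by
  choose h hcont hopen using fun x : {x // x ≠ a} =>
    exists_continuous_primeFactor_isOpen_induced_singleton (t := t) x.2
  have hprime : primeFactor t a = ⨅ o : Option {x // x ≠ a}, t.induced (o.elim id h) := by
    refine le_antisymm (le_iInf fun o => ?_) (le_primeFactor ?_ fun x hxa => ?_)
    · cases o with
      | none => exact primeFactor_le.trans_eq induced_id.symm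
      | some x => exact continuous_iff_le_induced.1 (hcont x)
    · exact (iInf_le _ none).trans_eq induced_id
    · exact TopologicalSpace.le_def.1
        (iInf_le (fun o : Option {x // x ≠ a} => t.induced (o.elim id h)) (some ⟨x, hxa⟩)) _
        (hopen ⟨x, hxa⟩)
  rw [hprime]
  exact hA.iInf_induced_mem (fun _ => t) (fun _ => hX) _ fun w w' hw => congrFun hw none

end IsEpireflectiveClass

namespace IsADClass

variable {𝒜 ℬ : SpaceClass.{u}}

theorem iSup_coinduced_mem (hB : IsADClass 𝒜 ℬ) {ι Z : Type u} {Y : ι → Type u}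
    (tY : ∀ i, TopologicalSpace (Y i)) (hY : ∀ i, ℬ (Y i) (tY i)) (f : ∀ i, Y i → Z)
    (hf : ∀ z, ∃ i y, f i y = z) (hZ : 𝒜 Z (⨆ i, (tY i).coinduced (f i))) :
    ℬ Z (⨆ i, (tY i).coinduced (f i)) := by
  refine hB.divisible _ _ _ _ (fun p : Σ i, Y i => f p.1 p.2) (hB.sums ι Y tY hY) hZ
    (@IsQuotientMap.mk _ _ (sigmaTop Y tY) (⨆ i, (tY i).coinduced (f i)) _
      (@IsCoinducing.mk _ _ (sigmaTop Y tY) (⨆ i, (tY i).coinduced (f i)) _ ?_) fun z => ?_)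
  · simp only [sigmaTop, coinduced_iSup, coinduced_compose]
    rfl
  · obtain ⟨i, y, rfl⟩ := hf z
    exact ⟨⟨i, y⟩, rfl⟩

theorem triangleTop_mem (hB : IsADClass 𝒜 ℬ) {X Y : Type u} {tX : TopologicalSpace X}
    {tY : TopologicalSpace Y} {b : Y} (hX : ℬ X tX) (hY : ℬ Y tY)
    (h𝒜 : 𝒜 (X × Y) (triangleTop tX tY b)) : ℬ (X × Y) (triangleTop tX tY b) := by
  let F : Option X → Type u := fun o => o.elim X fun _ => Y
  let tF : ∀ o, TopologicalSpace (F o) := fun o => match o with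
    | none => tX
    | some _ => tY
  let g : ∀ o, F o → X × Y := fun o => match o with
    | none => fun x => (x, b)
    | some a => fun y => (a, y)
  have htri : triangleTop tX tY b = ⨆ o, (tF o).coinduced (g o) :=
    (iSup_option fun o => (tF o).coinduced (g o)).symm
  rw [htri] at h𝒜 ⊢
  refine hB.iSup_coinduced_mem tF (fun o => ?_) g (fun p => ⟨some p.1, p.2, rfl⟩) h𝒜
  cases o
  exacts [hX, hY]

end IsADClass

section Triangle

variable {X Y : Type u} [tX : TopologicalSpace X] [tY : TopologicalSpace Y] {b : Y}

theorem isOpen_triangleTop_iff {W : Set (X × Y)} :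
    IsOpen[triangleTop tX tY b] W ↔
      IsOpen {x | (x, b) ∈ W} ∧ ∀ x, IsOpen {y | (x, y) ∈ W} :=
  isOpen_sup.trans (and_congr Iff.rfl isOpen_iSup_iff)

theorem isOpen_triangleTop_prod {s : Set X} {t : Set Y} (hs : b ∈ t → IsOpen s)
    (ht : IsOpen t) : IsOpen[triangleTop tX tY b] (s ×ˢ t) := by
  refine isOpen_triangleTop_iff.2 ⟨?_, fun x => ?_⟩
  · by_cases hb : b ∈ t
    · simpa [hb] using hs hb
    · simp [hb]
  · by_cases hx : x ∈ s
    · simpa [hx] using ht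
    · simp [hx]

theorem IsOpen.exists_mem_ne {V : Set Y} (hV : IsOpen V) (hbV : b ∈ V) (hb : ¬IsOpen {b}) :
    ∃ y ∈ V, y ≠ b := by
  by_contra! h
  exact hb (Set.eq_singleton_iff_unique_mem.2 ⟨hbV, h⟩ ▸ hV)

def triangleSubspace (a : X) (b : Y) : Set (X × Y) := {p | p.2 ≠ b ∨ p = (a, b)}

theorem isQuotientMap_triangleSubspace_fst (a : X) (hb : ¬IsOpen {b}) (hbc : IsClosed {b}) :
    @IsQuotientMap (triangleSubspace a b) X ((triangleTop tX tY b).induced Subtype.val)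
      (primeFactor tX a) fun p => p.1.1 := by
  obtain ⟨y₀, -, hy₀⟩ := isOpen_univ.exists_mem_ne (Set.mem_univ b) hb
  refine @IsQuotientMap.mk _ _ ((triangleTop tX tY b).induced Subtype.val) (primeFactor tX a) _
    (@IsCoinducing.mk _ _ ((triangleTop tX tY b).induced Subtype.val) (primeFactor tX a) _
      (le_antisymm ?_ (le_primeFactor ?_ fun x hxa => ?_)))
    fun x => ⟨⟨(x, y₀), .inl hy₀⟩, rfl⟩
  · refine TopologicalSpace.le_def.2 fun U hU haU => ?_
    obtain ⟨W, hW, hWU⟩ :=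
      (isOpen_induced_iff (t := triangleTop tX tY b)).1 (isOpen_coinduced.1 hU)
    obtain ⟨hrow, hcol⟩ := isOpen_triangleTop_iff.1 hW
    have hmem (p : triangleSubspace a b) : p.1 ∈ W ↔ p.1.1 ∈ U := Set.ext_iff.1 hWU p
    have haW : a ∈ {x | (x, b) ∈ W} := (hmem ⟨(a, b), .inr rfl⟩).2 haU
    refine Filter.mem_of_superset (hrow.mem_nhds haW) fun x hx => ?_
    obtain ⟨y, hyW, hyb⟩ := (hcol x).exists_mem_ne hx hb
    exact (hmem ⟨(x, y), .inl hyb⟩).1 hyW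
  · refine TopologicalSpace.le_def.2 fun s hs => isOpen_coinduced.2 ?_
    refine isOpen_induced (t := triangleTop tX tY b) (s := Prod.fst ⁻¹' s) ?_
    exact Set.prod_univ ▸ isOpen_triangleTop_prod (fun _ => hs) isOpen_univ
  · have hfiber : (fun p : triangleSubspace a b => p.1.1) ⁻¹' {x} =
        Subtype.val ⁻¹' (({x} : Set X) ×ˢ ({b}ᶜ : Set Y)) := by
      ext ⟨⟨x', y⟩, hp⟩
      simp only [triangleSubspace] at hp
      aesop
    refine isOpen_coinduced.2 (hfiber ▸ isOpen_induced (t := triangleTop tX tY b) ?_)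
    exact isOpen_triangleTop_prod (fun h => absurd rfl h) hbc.isOpen_compl

end Triangle

theorem statement2_general (𝒜 ℬ : SpaceClass.{u})
    (hA : IsEpireflectiveClass 𝒜)
    (hT0 : ∀ (X : Type u) (tX : TopologicalSpace X), 𝒜 X tX → @T0Space X tX)
    (hB : IsADClass 𝒜 ℬ)
    (hher : IsHereditary ℬ)
    (htri : ∀ (X : Type u) (tX : TopologicalSpace X), ℬ X tX →
      ∃ (Y : Type u) (tY : TopologicalSpace Y) (b : Y),
        ℬ Y tY ∧ ¬ @IsOpen Y tY {b} ∧ @IsClosed Y tY {b} ∧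
          𝒜 (X × Y) (triangleTop tX tY b)) :
    ∀ (X : Type u) (tX : TopologicalSpace X) (a : X),
      ℬ X tX → ℬ X (primeFactor tX a) := by
  intro X tX a hX
  obtain ⟨Y, tY, b, hY, hb, hbc, h𝒜⟩ := htri X tX hX
  have hX𝒜 : 𝒜 X tX := hB.subset X tX hX
  have hS : ℬ (triangleSubspace a b) ((triangleTop tX tY b).induced Subtype.val) :=
    hher _ _ _ ⟨(a, b), .inr rfl⟩ (hB.triangleTop_mem hX hY h𝒜)
  have hprime𝒜 : 𝒜 X (primeFactor tX a) :=
    @IsEpireflectiveClass.primeFactor_mem _ hA X tX (hT0 X tX hX𝒜) hX𝒜 a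
  exact hB.divisible _ _ _ _ _ hS hprime𝒜 (isQuotientMap_triangleSubspace_fst a hb hbc)

/-- If for every `X` in a hereditary AD-class `ℬ` (in an epireflective
class `𝒜` of T0 spaces containing a space with two points) there are `Y ∈ ℬ` and a
non-isolated `b ∈ Y` with `{b}` closed such that `X △_b Y ∈ 𝒜`, then `ℬ` is closed
under prime factors. -/
theorem statement2 (𝒜 ℬ : SpaceClass.{u})
    (hA : IsEpireflectiveClass 𝒜)
    (hT0 : ∀ (X : Type u) (tX : TopologicalSpace X), 𝒜 X tX → @T0Space X tX)
    (hA2 : ∃ (X : Type u) (tX : TopologicalSpace X), 𝒜 X tX ∧ ∃ x y : X, x ≠ y)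
    (hB : IsADClass 𝒜 ℬ)
    (hher : IsHereditary ℬ)
    (htri : ∀ (X : Type u) (tX : TopologicalSpace X), ℬ X tX →
      ∃ (Y : Type u) (tY : TopologicalSpace Y) (b : Y),
        ℬ Y tY ∧ ¬ @IsOpen Y tY {b} ∧ @IsClosed Y tY {b} ∧
          𝒜 (X × Y) (triangleTop tX tY b)) :
    ∀ (X : Type u) (tX : TopologicalSpace X) (a : X),
      ℬ X tX → ℬ X (primeFactor tX a) :=
  statement2_general 𝒜 ℬ hA hT0 hB hher htri
end

section
/- Let 𝒜 be an epireflective class of topological spaces in which every member is a T0 space and which contains a space with at least two points, and let ℬ be a hereditary AD-class in 𝒜. If ℬ contains a space Y with a non-isolated point b ∈ Y such that {b} is closed in Y and the property P(b,Y,Z) holds for some Z ∈ 𝒜, then ℬ is closed under prime factors: X_a ∈ ℬ for every X ∈ ℬ and every a ∈ X. -/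
open Topology

universe u v w

/-- The property `P(b, Y, Z)`: there are a family `B` of open neighbourhoods of `b`
forming a neighbourhood base at `b`, a point `a ∈ Z` and an open neighbourhood `U₀`
of `a` such that every `V ∈ B` is the preimage of `U₀` under some continuous
`f : Y → Z` with `f b = a`. -/
def PropP {Y Z : Type u} (tY : TopologicalSpace Y) (tZ : TopologicalSpace Z) (b : Y) :
    Prop :=
  ∃ (B : Set (Set Y)) (a : Z) (U₀ : Set Z),
    (∀ V ∈ B, @IsOpen Y tY V ∧ b ∈ V) ∧
    (∀ W ∈ @nhds Y tY b, ∃ V ∈ B, V ⊆ W) ∧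
    @IsOpen Z tZ U₀ ∧ a ∈ U₀ ∧
    (∀ V ∈ B, ∃ f : Y → Z, @Continuous Y Z tY tZ f ∧ f b = a ∧ f ⁻¹' U₀ = V)

/-!
The prime factor `X_a` lies in `𝒜`: it embeds into `X × F ^ (X \ {a})` via
`x ↦ (x, (χᵢ x)ᵢ)`, where `F ∈ 𝒜` has points `p₀, p₁` such that some open set contains `p₁` but
not `p₀`, and `χᵢ` sends `i` to `p₁` and every other point to `p₀`. The T0 hypothesis and the
two-point space provide such an `F` for which every `χᵢ` is continuous away from `i`.

Next glue to `X` a copy of `Y` at every point `x`, identifying `b` with `x`. If `B`, `U₀` and the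
maps `f_V` witness `P(b, Y, Z)`, this space `M` embeds into `X × Y ^ X × Z ^ (X → B)` by
`(x, y) ↦ (x, y at coordinate x and b elsewhere, v ↦ f_{v x} y)`, so `M ∈ 𝒜`; as a quotient of a
sum of `X` and copies of `Y` it then lies in `ℬ`. For `U ⊆ X` the subspace of `M` made of `a`
and of the copies attached over `X \ U`, with `b` removed, lies in `ℬ` and projects continuously
onto `X_a`. If `a ∈ U`, the preimage of `U` is `{a}`, which is open only if `U` is a
neighbourhood of `a`, because `b` is not isolated. Hence `X_a` is a quotient of the sum of these
subspaces and lies in `ℬ`.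
-/

open Set Filter Topology Function TopologicalSpace

theorem primeFactor_eq_nhdsAdjoint {X : Type u} (t : TopologicalSpace X) (a : X) :
    primeFactor t a = nhdsAdjoint a (@nhds X t a) :=
  rfl

theorem continuous_nhdsAdjoint_of_isOpen_preimage_singleton {S X : Type*} [TopologicalSpace S]
    [TopologicalSpace X] {a : X} {g : S → X} (hg : Continuous g)
    (hfib : ∀ x ≠ a, IsOpen (g ⁻¹' {x})) : Continuous[_, nhdsAdjoint a (𝓝 a)] g := by
  refine continuous_def.2 fun U hU => isOpen_iff_mem_nhds.2 fun s hs => ?_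
  by_cases hsa : g s = a
  · exact hg.continuousAt.preimage_mem_nhds (hsa ▸ hU (hsa ▸ hs))
  · refine mem_of_superset ((hfib _ hsa).mem_nhds rfl) fun s' hs' => ?_
    rw [mem_preimage, mem_singleton_iff.1 hs']
    exact hs

theorem exists_ne_of_not_isOpen_singleton {Y : Type*} [TopologicalSpace Y] {b : Y}
    (hb : ¬IsOpen {b}) {V : Set Y} (hV : IsOpen V) (hbV : b ∈ V) : ∃ y ∈ V, y ≠ b := by
  by_contra! h
  exact hb (by rwa [show V = {b} from Subset.antisymm h (singleton_subset_iff.2 hbV)] at hV)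

theorem continuousAt_ite_eq {X F : Type*} [TopologicalSpace X] [TopologicalSpace F]
    [DecidableEq X] {p₀ p₁ : F} (h : p₁ ⤳ p₀ ∨ T1Space X) {i x : X} (hx : x ≠ i) :
    ContinuousAt (fun y => if y = i then p₁ else p₀) x := by
  rcases h with h | h
  · refine tendsto_nhds.2 fun N hN hxN => Eventually.of_forall fun y => ?_
    simp only [hx, if_false] at hxN
    by_cases hy : y = i
    · simpa [hy] using h.mem_open hN hxN
    · simpa [hy] using hxN
  · refine tendsto_nhds_of_eventually_eq ?_
    filter_upwards [eventually_ne_nhds hx] with y hy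
    simp [hy, hx]

theorem exists_mem_not_specializes {𝒜 : SpaceClass.{u}}
    (hT0 : ∀ (X : Type u) (tX : TopologicalSpace X), 𝒜 X tX → @T0Space X tX)
    (hA2 : ∃ (X : Type u) (tX : TopologicalSpace X), 𝒜 X tX ∧ ∃ x y : X, x ≠ y) :
    ∃ (F : Type u) (tF : TopologicalSpace F) (p₀ p₁ : F), 𝒜 F tF ∧ ¬ p₀ ⤳ p₁ ∧
      (p₁ ⤳ p₀ ∨ ∀ (X : Type u) (tX : TopologicalSpace X), 𝒜 X tX → @T1Space X tX) := by
  by_cases hT1 : ∀ (X : Type u) (tX : TopologicalSpace X), 𝒜 X tX → @T1Space X tX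
  · obtain ⟨X, tX, hX, x, y, hxy⟩ := hA2
    have := hT1 X tX hX
    exact ⟨X, tX, x, y, hX, fun h => hxy (specializes_iff_eq.1 h), .inr hT1⟩
  · push Not at hT1
    obtain ⟨W, tW, hW, hnT1⟩ := hT1
    obtain ⟨w, v, hwv, hne⟩ : ∃ w v : W, w ⤳ v ∧ w ≠ v := by
      simpa [t1Space_iff_specializes_imp_eq] using hnT1
    have := hT0 W tW hW
    exact ⟨W, tW, v, w, hW, fun hvw => hne (hwv.antisymm hvw).eq, .inl hwv⟩

namespace IsEpireflectiveClass

variable {𝒜 : SpaceClass.{u}}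

theorem induced_mem (hA : IsEpireflectiveClass 𝒜) {T P : Type u} [tP : TopologicalSpace P]
    {e : T → P} (he : Injective e) (hP : 𝒜 P tP) : 𝒜 T (induced e tP) :=
  letI := induced e tP
  hA.homeo _ _ _ _ ⟨(IsEmbedding.mk ⟨rfl⟩ he).toHomeomorph.symm⟩ (hA.subspace P _ (range e) hP)

theorem pi_mem (hA : IsEpireflectiveClass 𝒜) (ι : Type u) {Y : Type u} [tY : TopologicalSpace Y]
    (hY : 𝒜 Y tY) : 𝒜 (ι → Y) Pi.topologicalSpace :=
  hA.prod ι (fun _ => Y) _ fun _ => hY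

theorem prod_mem (hA : IsEpireflectiveClass 𝒜) {X Y : Type u} [tX : TopologicalSpace X]
    [tY : TopologicalSpace Y] (hX : 𝒜 X tX) (hY : 𝒜 Y tY) :
    𝒜 (X × Y) instTopologicalSpaceProd := by
  let F : PUnit.{u + 1} ⊕ PUnit.{u + 1} → Type u := Sum.elim (fun _ => X) (fun _ => Y)
  let tF : ∀ i, TopologicalSpace (F i) := fun
    | .inl _ => tX
    | .inr _ => tY
  have hF : 𝒜 (∀ i, F i) Pi.topologicalSpace := hA.prod _ F tF (by rintro (_ | _) <;> assumption)
  exact hA.homeo _ _ _ _ ⟨(Homeomorph.sumPiEquivProdPi _ _ F).trans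
    ((Homeomorph.piUnique _).prodCongr (Homeomorph.piUnique _))⟩ hF

theorem nhdsAdjoint_mem (hA : IsEpireflectiveClass 𝒜)
    (hT0 : ∀ (X : Type u) (tX : TopologicalSpace X), 𝒜 X tX → @T0Space X tX)
    (hA2 : ∃ (X : Type u) (tX : TopologicalSpace X), 𝒜 X tX ∧ ∃ x y : X, x ≠ y)
    {X : Type u} [tX : TopologicalSpace X] (hX : 𝒜 X tX) (a : X) :
    𝒜 X (nhdsAdjoint a (𝓝 a)) := by
  classical
  obtain ⟨F, tF, p₀, p₁, hF, h01, hsep⟩ := exists_mem_not_specializes hT0 hA2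
  obtain ⟨G, hG, hp₁, hp₀⟩ := not_specializes_iff_exists_open.1 h01
  have hsepX : p₁ ⤳ p₀ ∨ T1Space X := hsep.imp_right fun h => h X tX hX
  let e : X → X × ({i // i ≠ a} → F) := fun x => (x, fun i => if x = i then p₁ else p₀)
  have he : nhdsAdjoint a (𝓝 a) = induced e inferInstance := by
    refine le_antisymm ?_ ?_
    · rw [← continuous_iff_le_induced, continuous_nhdsAdjoint_dom]
      exact continuousAt_id.prodMk
        (continuousAt_pi.2 fun i => continuousAt_ite_eq hsepX (Ne.symm i.2))
    · refine (le_nhdsAdjoint_iff _ _ _).2 ⟨?_, fun x hx => ?_⟩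
      · rw [nhds_induced]
        refine (comap_mono (continuous_fst.tendsto (e a)).le_comap).trans ?_
        rw [comap_comap]
        exact (comap_id (f := 𝓝 a)).le.trans le_sup_right
      · convert isOpen_induced (f := e)
          ((hG.preimage (continuous_apply ⟨x, hx⟩)).preimage continuous_snd)
        ext y
        by_cases hy : y = x <;> simp [e, hy, hp₁, hp₀]
  rw [he]
  exact hA.induced_mem (fun x y h => congrArg Prod.fst h) (hA.prod_mem hX (hA.pi_mem _ hF))

end IsEpireflectiveClass

section Glued

variable {X Y : Type u}

def GluingSummand (X Y : Type u) : Option X → Type u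
  | none => X
  | some _ => Y

instance [tX : TopologicalSpace X] [tY : TopologicalSpace Y] :
    ∀ i, TopologicalSpace (GluingSummand X Y i)
  | none => tX
  | some _ => tY

/-- `X` with a copy of `Y` attached at every point `x` by identifying `b` with `x`: the point
`⟨x, y⟩` is `y` in the copy attached at `x`, and `⟨x, b⟩` is `x` itself. -/
@[ext]
structure Glued (X Y : Type u) (b : Y) where
  base : X
  fiber : Y

def gluingMap (b : Y) : (Σ i, GluingSummand X Y i) → Glued X Y b
  | ⟨none, x⟩ => ⟨x, b⟩
  | ⟨some x, y⟩ => ⟨x, y⟩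

variable [TopologicalSpace X] [TopologicalSpace Y] {b : Y}

instance (b : Y) : TopologicalSpace (Glued X Y b) := coinduced (gluingMap b) inferInstance

theorem isQuotientMap_gluingMap (b : Y) : IsQuotientMap (gluingMap (X := X) b) :=
  ⟨⟨rfl⟩, fun p => ⟨⟨some p.base, p.fiber⟩, rfl⟩⟩

theorem isOpen_glued_iff {W : Set (Glued X Y b)} :
    IsOpen W ↔ IsOpen {x | ⟨x, b⟩ ∈ W} ∧ ∀ x, IsOpen {y | ⟨x, y⟩ ∈ W} := by
  rw [isOpen_coinduced, isOpen_sigma_iff, Option.forall]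
  rfl

theorem continuous_glued_base : Continuous (Glued.base : Glued X Y b → X) := by
  refine continuous_coinduced_dom.2 (continuous_sigma_iff.2 ?_)
  rintro (_ | x)
  exacts [continuous_id, continuous_const]

theorem isOpen_glued_fiber_ne (hb : IsClosed {b}) (x : X) :
    IsOpen {p : Glued X Y b | p.base = x ∧ p.fiber ≠ b} := by
  refine isOpen_glued_iff.2 ⟨by simp, fun x' => ?_⟩
  by_cases hx : x' = x
  · convert hb.isOpen_compl using 1
    ext
    simp [hx]
  · simp [hx]

end Glued

section GluedEmbedding

variable {X Y Z S : Type u} {b : Y} {F : S → Y → Z}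

def gluedToProd [DecidableEq X] (b : Y) (F : S → Y → Z) (p : Glued X Y b) :
    X × (X → Y) × ((X → S) → Z) :=
  (p.base, update (fun _ => b) p.base p.fiber, fun v => F (v p.base) p.fiber)

variable [DecidableEq X]

theorem injective_gluedToProd : Injective (gluedToProd (X := X) b F) := fun p q h => by
  have h₁ : p.base = q.base := congrArg Prod.fst h
  have h₂ := congrFun (congrArg (fun P => P.2.1) h) p.base
  simp only [gluedToProd, update_self, h₁] at h₂
  exact Glued.ext h₁ h₂

variable [TopologicalSpace X] [TopologicalSpace Y] [TopologicalSpace Z]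

theorem continuous_gluedToProd {z₀ : Z} (hFc : ∀ s, Continuous (F s)) (hFb : ∀ s, F s b = z₀) :
    Continuous (gluedToProd (X := X) b F) := by
  refine continuous_coinduced_dom.2 (continuous_sigma_iff.2 ?_)
  rintro (_ | x)
  · show Continuous fun x : X => gluedToProd b F ⟨x, b⟩
    simp only [gluedToProd, update_eq_self, hFb]
    fun_prop
  · show Continuous fun y : Y => gluedToProd b F ⟨x, y⟩
    simp only [gluedToProd]
    fun_prop

theorem isEmbedding_gluedToProd (hb : IsClosed {b}) {z₀ : Z} {U₀ : Set Z} (hU₀ : IsOpen U₀)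
    (hz₀ : z₀ ∈ U₀) (hFc : ∀ s, Continuous (F s)) (hFb : ∀ s, F s b = z₀)
    (hbase : ∀ W ∈ 𝓝 b, ∃ s, F s ⁻¹' U₀ ⊆ W) :
    IsEmbedding (gluedToProd (X := X) b F) := by
  refine ⟨⟨le_antisymm (continuous_gluedToProd hFc hFb).le_induced fun W hW => ?_⟩,
    injective_gluedToProd⟩
  obtain ⟨hWb, hWy⟩ := isOpen_glued_iff.1 hW
  refine (@isOpen_iff_mem_nhds _ (induced _ _) W).2 fun p hp => ?_
  rw [nhds_induced, mem_comap]
  by_cases hpb : p.fiber = b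
  · -- near a point of `X`, the `Z`-coordinate at a suitable `v` confines each copy of `Y` to `W`
    have hV : ∀ x, ∃ s, F s ⁻¹' U₀ ⊆ {y | ⟨x, b⟩ ∈ W → ⟨x, y⟩ ∈ W} := fun x => by
      refine hbase _ ?_
      by_cases hx : ⟨x, b⟩ ∈ W
      · exact mem_of_superset ((hWy x).mem_nhds hx) fun y hy _ => hy
      · exact univ_mem' fun y h => absurd h hx
    choose v hvW using hV
    refine ⟨{P | P.1 ∈ {x | ⟨x, b⟩ ∈ W} ∧ P.2.2 v ∈ U₀},
      ((hWb.preimage continuous_fst).inter (hU₀.preimage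
        ((continuous_apply _).comp (continuous_snd.comp continuous_snd)))).mem_nhds ?_, ?_⟩
    · refine ⟨?_, ?_⟩
      · simp only [gluedToProd, ← hpb]
        exact hp
      · simp [gluedToProd, hpb, hFb, hz₀]
    · rintro q ⟨hqW, hqU⟩
      exact hvW _ hqU hqW
  · refine ⟨{P | P.2.1 p.base ∈ {y | ⟨p.base, y⟩ ∈ W} ∩ {b}ᶜ},
      (((hWy _).inter hb.isOpen_compl).preimage
        ((continuous_apply _).comp (continuous_fst.comp continuous_snd))).mem_nhds ?_, ?_⟩
    · simp [gluedToProd, hpb, hp]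
    · rintro q ⟨hqW, hqb⟩
      by_cases hq : q.base = p.base
      · simp only [gluedToProd, mem_ofPred_eq, hq, update_self] at hqW
        rwa [show q = ⟨p.base, q.fiber⟩ from Glued.ext hq rfl]
      · simp [gluedToProd, update_of_ne (Ne.symm hq)] at hqb

end GluedEmbedding

theorem IsEpireflectiveClass.glued_mem {𝒜 : SpaceClass.{u}} (hA : IsEpireflectiveClass 𝒜)
    {X Y Z : Type u} [tX : TopologicalSpace X] [tY : TopologicalSpace Y] [tZ : TopologicalSpace Z]
    (hX : 𝒜 X tX) (hY : 𝒜 Y tY) (hZ : 𝒜 Z tZ) {b : Y} (hb : IsClosed {b}) (hP : PropP tY tZ b) :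
    𝒜 (Glued X Y b) inferInstance := by
  classical
  obtain ⟨B, z₀, U₀, -, hbase, hU₀, hz₀, hmaps⟩ := hP
  choose F hFc hFb hFU using fun V : B => hmaps V V.2
  have he := isEmbedding_gluedToProd (X := X) hb hU₀ hz₀ hFc hFb fun W hW => by
    obtain ⟨V, hVB, hVW⟩ := hbase W hW
    exact ⟨⟨V, hVB⟩, (hFU _).trans_subset hVW⟩
  rw [he.eq_induced]
  exact hA.induced_mem he.injective
    (hA.prod_mem hX (hA.prod_mem (hA.pi_mem _ hY) (hA.pi_mem _ hZ)))

section Detector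

variable {X Y : Type u} [TopologicalSpace X] [TopologicalSpace Y] {a : X} {b : Y}

/-- Projected to `X_a`, the preimage of a set `U ∋ a` is the single point `⟨a, b⟩`, which is
isolated only if `U` is a neighbourhood of `a`. -/
def detector (a : X) (b : Y) (U : Set X) : Set (Glued X Y b) :=
  {p | p = ⟨a, b⟩ ∨ p.base ∉ U ∧ p.fiber ≠ b}

theorem continuous_detector_base (hb : IsClosed {b}) (U : Set X) :
    Continuous[_, nhdsAdjoint a (𝓝 a)] fun p : detector a b U => p.1.base := by
  refine continuous_nhdsAdjoint_of_isOpen_preimage_singleton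
    (continuous_glued_base.comp continuous_subtype_val) fun x hx => ?_
  convert (isOpen_glued_fiber_ne hb x).preimage continuous_subtype_val using 1
  ext ⟨p, hp | hp⟩
  · simp [hp, Ne.symm hx]
  · simp [hp.2]

theorem not_isOpen_detector_preimage (hb : ¬IsOpen {b}) {U : Set X} (haU : a ∈ U)
    (hU : U ∉ 𝓝 a) : ¬IsOpen ((fun p : detector a b U => p.1.base) ⁻¹' U) := by
  intro hopen
  obtain ⟨W, hW, hWU⟩ := isOpen_induced_iff.1 hopen
  have haW : ⟨a, b⟩ ∈ W := by
    have : (⟨⟨a, b⟩, Or.inl rfl⟩ : detector a b U) ∈ Subtype.val ⁻¹' W := hWU ▸ haU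
    exact this
  obtain ⟨hWb, hWy⟩ := isOpen_glued_iff.1 hW
  obtain ⟨x, hxW, hxU⟩ := not_subset.1 fun h => hU (mem_of_superset (hWb.mem_nhds haW) h)
  obtain ⟨y, hyW, hyb⟩ := exists_ne_of_not_isOpen_singleton hb (hWy x) hxW
  have : (⟨⟨x, y⟩, Or.inr ⟨hxU, hyb⟩⟩ : detector a b U) ∈ Subtype.val ⁻¹' W := hyW
  rw [hWU] at this
  exact hxU this

theorem isQuotientMap_detector (hbc : IsClosed {b}) (hb : ¬IsOpen {b}) :
    @IsQuotientMap _ X _ (nhdsAdjoint a (𝓝 a))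
      fun p : Σ U : Set X, detector a b U => p.2.1.base := by
  obtain ⟨y, -, hy⟩ := exists_ne_of_not_isOpen_singleton hb isOpen_univ (mem_univ b)
  refine @IsQuotientMap.mk _ _ _ (nhdsAdjoint a (𝓝 a)) _
    (@IsCoinducing.mk _ _ _ (nhdsAdjoint a (𝓝 a)) _ (le_antisymm ?_ ?_))
    fun x => ⟨⟨∅, ⟨x, y⟩, Or.inr ⟨notMem_empty x, hy⟩⟩, rfl⟩
  · intro U hU haU
    by_contra hUa
    exact not_isOpen_detector_preimage hb haU hUa (isOpen_sigma_iff.1 hU U)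
  · rw [← continuous_iff_coinduced_le]
    exact @continuous_sigma _ _ _ _ (nhdsAdjoint a (𝓝 a)) _
      fun U => continuous_detector_base hbc U

end Detector

/-- A hereditary AD-class `ℬ` (in an epireflective class `𝒜` of T0
spaces containing a space with two points) that contains a space `Y` with a
non-isolated point `b`, `{b}` closed, and `P(b,Y,Z)` for some `Z ∈ 𝒜`, is closed
under prime factors. -/
theorem statement4 (𝒜 ℬ : SpaceClass.{u})
    (hA : IsEpireflectiveClass 𝒜)
    (hT0 : ∀ (X : Type u) (tX : TopologicalSpace X), 𝒜 X tX → @T0Space X tX)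
    (hA2 : ∃ (X : Type u) (tX : TopologicalSpace X), 𝒜 X tX ∧ ∃ x y : X, x ≠ y)
    (hB : IsADClass 𝒜 ℬ)
    (hher : IsHereditary ℬ)
    (hY : ∃ (Y : Type u) (tY : TopologicalSpace Y) (b : Y),
      ℬ Y tY ∧ ¬ @IsOpen Y tY {b} ∧ @IsClosed Y tY {b} ∧
        ∃ (Z : Type u) (tZ : TopologicalSpace Z), 𝒜 Z tZ ∧ PropP tY tZ b) :
    ∀ (X : Type u) (tX : TopologicalSpace X) (a : X),
      ℬ X tX → ℬ X (primeFactor tX a) := by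
  obtain ⟨Y, tY, b, hYB, hbo, hbc, Z, tZ, hZ, hP⟩ := hY
  intro X tX a hX
  have hM : ℬ (Glued X Y b) inferInstance :=
    hB.divisible _ _ _ _ (gluingMap b) (hB.sums _ _ _ (by rintro (_ | _) <;> assumption))
      (hA.glued_mem (hB.subset _ _ hX) (hB.subset _ _ hYB) hZ hbc hP) (isQuotientMap_gluingMap b)
  have hS : ∀ U, ℬ (detector a b U) inferInstance :=
    fun U => hher _ _ _ ⟨⟨a, b⟩, Or.inl rfl⟩ hM
  rw [primeFactor_eq_nhdsAdjoint]
  exact hB.divisible _ _ _ _ _ (hB.sums _ _ _ hS)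
    (hA.nhdsAdjoint_mem hT0 hA2 (hB.subset _ _ hX) a) (isQuotientMap_detector hbc hbo)
end

section
/- Let 𝒜 be an epireflective class of topological spaces in which every member is a T0 space and which contains a space with at least two points, and let ℬ be a hereditary AD-class in 𝒜. If ℬ contains at least one prime space, then ℬ is closed under prime factors: X_a ∈ ℬ for every X ∈ ℬ and every a ∈ X. -/
open Topology

universe u v w

/-!
`X_a` is obtained from members of `ℬ` by the three operations available. Attach to every point
`x` of `X` a copy of the prime space `B`, identifying its accumulation point `b` with `x`: this
glued space is a quotient of the sum of `X` and of copies of `B`. In it, the subspace made of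
`(a, b)` and of all points outside the base copy of `X` is mapped onto `X_a` by the first
projection, and this is a quotient map because `b` is not isolated in `B`: if the preimage of a
set `s ∋ a` is open, then every point of some neighbourhood of `a` in `X` carries points of its
copy of `B` mapped into `s`.

Divisibility needs the glued space and `X_a` to lie in `𝒜`; both embed into a product
`X × Z ^ κ` with `Z ∈ 𝒜`. If some member of `𝒜` is not T1 it contains a pair `p ⤳ q`, and
indicators of open sets with values in `{p, q}` embed every T0 space into a power of it.
Otherwise `𝒜` consists of T1 spaces, so that in both spaces the relevant neighbourhoods can be
chosen clopen, and indicators of clopen sets into any member with two points do the job.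
-/

theorem isOpen_sigmaTop_iff {ι : Type v} {Y : ι → Type w} {t : ∀ i, TopologicalSpace (Y i)}
    {s : Set (Σ i, Y i)} : IsOpen[sigmaTop Y t] s ↔ ∀ i, IsOpen[t i] (Sigma.mk i ⁻¹' s) :=
  isOpen_iSup_iff.trans (forall_congr' fun _ => isOpen_coinduced)

theorem continuous_sigmaTop_iff {ι : Type v} {Y : ι → Type w}
    {t : ∀ i, TopologicalSpace (Y i)} {Z : Type*} [TopologicalSpace Z] {f : (Σ i, Y i) → Z} :
    Continuous[sigmaTop Y t, _] f ↔ ∀ i, Continuous[t i, _] (fun y => f ⟨i, y⟩) :=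
  continuous_iSup_dom.trans (forall_congr' fun _ => continuous_coinduced_dom)

theorem isOpen_of_forall_ne_isOpen_singleton {Y : Type*} [TopologicalSpace Y] {c : Y}
    (hiso : ∀ y ≠ c, IsOpen {y}) {s : Set Y} (hs : c ∉ s) : IsOpen s := by
  rw [← Set.biUnion_of_singleton s]
  exact isOpen_biUnion fun y hy => hiso y (ne_of_mem_of_not_mem hy hs)

theorem exists_ne_mem_of_not_isOpen_singleton {Y : Type*} [TopologicalSpace Y] {c : Y}
    (hc : ¬IsOpen {c}) {U : Set Y} (hU : IsOpen U) (hcU : c ∈ U) : ∃ y ∈ U, y ≠ c := by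
  by_contra! h
  exact hc (Set.eq_singleton_iff_unique_mem.2 ⟨hcU, h⟩ ▸ hU)

namespace IsEpireflectiveClass

variable {𝒜 : SpaceClass.{u}}

theorem of_isEmbedding (hA : IsEpireflectiveClass 𝒜) {Y Z : Type u} [tY : TopologicalSpace Y]
    [tZ : TopologicalSpace Z] (hZ : 𝒜 Z tZ) {f : Y → Z} (hf : IsEmbedding f) : 𝒜 Y tY :=
  hA.homeo _ _ _ _ ⟨hf.toHomeomorph.symm⟩ (hA.subspace Z tZ _ hZ)

theorem mem_prod (hA : IsEpireflectiveClass 𝒜) {Y Z : Type u} [tY : TopologicalSpace Y]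
    [tZ : TopologicalSpace Z] (hY : 𝒜 Y tY) (hZ : 𝒜 Z tZ) : 𝒜 (Y × Z) inferInstance := by
  let F : ULift.{u} Bool → Type u := fun i => bif i.down then Y else Z
  let tF : ∀ i, TopologicalSpace (F i)
    | ⟨true⟩ => tY
    | ⟨false⟩ => tZ
  let e : (∀ i, F i) ≃ₜ Y × Z :=
    { toFun := fun f => (f ⟨true⟩, f ⟨false⟩)
      invFun := fun p i => match i with
        | ⟨true⟩ => p.1
        | ⟨false⟩ => p.2
      left_inv := fun f => funext fun | ⟨true⟩ => rfl | ⟨false⟩ => rfl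
      right_inv := fun _ => rfl
      continuous_toFun := (continuous_apply _).prodMk (continuous_apply _)
      continuous_invFun := continuous_pi fun
        | ⟨true⟩ => continuous_fst
        | ⟨false⟩ => continuous_snd }
  exact hA.homeo _ _ _ _ ⟨e⟩ (hA.prod _ F tF fun | ⟨true⟩ => hY | ⟨false⟩ => hZ)

theorem of_isOpen_basis (hA : IsEpireflectiveClass 𝒜) {Y X Z : Type u}
    [tY : TopologicalSpace Y] [T0Space Y] [tX : TopologicalSpace X] [tZ : TopologicalSpace Z]
    (hX : 𝒜 X tX) (hZ : 𝒜 Z tZ) {g : Y → X} (hg : Continuous g) {W : Set Z} (hW : IsOpen W)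
    (hbasis : ∀ s, IsOpen s → ∀ y ∈ s, ∃ V, IsOpen V ∧ ∃ f : C(Y, Z),
      y ∈ g ⁻¹' V ∩ f ⁻¹' W ∧ g ⁻¹' V ∩ f ⁻¹' W ⊆ s) :
    𝒜 Y tY := by
  let e : Y → X × (C(Y, Z) → Z) := fun y => (g y, fun f => f y)
  have he : IsInducing e := by
    refine ⟨le_antisymm (continuous_iff_le_induced.1 ?_) fun s hs => ?_⟩
    · exact hg.prodMk (continuous_pi fun f => f.continuous)
    have hfW (f : C(Y, Z)) : IsOpen ((fun φ : C(Y, Z) → Z => φ f) ⁻¹' W) :=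
      hW.preimage (continuous_apply f)
    let := TopologicalSpace.induced e inferInstance
    refine isOpen_iff_forall_mem_open.2 fun y hy => ?_
    obtain ⟨V, hV, f, hyVf, hVf⟩ := hbasis s hs y hy
    exact ⟨_, hVf, isOpen_induced (f := e) (hV.prod (hfW f)), hyVf⟩
  exact hA.of_isEmbedding (hA.mem_prod hX (hA.prod _ _ _ fun _ => hZ)) ⟨he, he.injective⟩

theorem of_t0Space_of_specializes (hA : IsEpireflectiveClass 𝒜) {Z : Type u}
    [tZ : TopologicalSpace Z] [T0Space Z] (hZ : 𝒜 Z tZ) {p q : Z} (hpq : p ≠ q) (h : p ⤳ q)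
    (Y : Type u) [tY : TopologicalSpace Y] [T0Space Y] : 𝒜 Y tY := by
  classical
  obtain ⟨W, hW, hpW, hqW⟩ : ∃ W, IsOpen W ∧ p ∈ W ∧ q ∉ W := by
    by_contra! hne
    exact hpq (h.antisymm (specializes_iff_forall_open.2 hne)).eq
  refine hA.of_isOpen_basis hZ hZ (continuous_const (y := p)) hW fun s hs y hy => ?_
  refine ⟨Set.univ, isOpen_univ, ⟨s.piecewise (fun _ => p) (fun _ => q), ?_⟩, ?_, ?_⟩
  · refine continuous_def.2 fun O hO => ?_
    by_cases hqO : q ∈ O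
    · have hpO : p ∈ O := specializes_iff_forall_open.1 h O hO hqO
      simp [Set.piecewise_preimage, hpO, hqO]
    · by_cases hpO : p ∈ O <;> simp [Set.piecewise_preimage, hpO, hqO, hs]
  · simp [hy, hpW]
  · intro x hx
    by_contra hxs
    simp [hxs, hqW] at hx

theorem of_isClopen_basis (hA : IsEpireflectiveClass 𝒜) {Z : Type u} [tZ : TopologicalSpace Z]
    [T0Space Z] (hZ : 𝒜 Z tZ) {p q : Z} (hpq : p ≠ q) {Y X : Type u}
    [tY : TopologicalSpace Y] [T0Space Y] [tX : TopologicalSpace X] (hX : 𝒜 X tX) {g : Y → X}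
    (hg : Continuous g)
    (hbasis : ∀ s, IsOpen s → ∀ y ∈ s, ∃ V, IsOpen V ∧ ∃ C, IsClopen C ∧
      y ∈ g ⁻¹' V ∩ C ∧ g ⁻¹' V ∩ C ⊆ s) :
    𝒜 Y tY := by
  classical
  obtain ⟨p, q, W, hW, hpW, hqW⟩ : ∃ p q W, IsOpen W ∧ p ∈ W ∧ q ∉ W := by
    rcases exists_isOpen_xor_mem hpq with ⟨W, hW, ⟨hpW, hqW⟩ | ⟨hqW, hpW⟩⟩
    exacts [⟨p, q, W, hW, hpW, hqW⟩, ⟨q, p, W, hW, hqW, hpW⟩]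
  refine hA.of_isOpen_basis hX hZ hg hW fun s hs y hy => ?_
  obtain ⟨V, hV, C, hC, hyVC, hVC⟩ := hbasis s hs y hy
  have hf : Continuous (C.piecewise (fun _ => p) (fun _ => q)) :=
    continuous_piecewise (by simp [hC.frontier_eq]) continuousOn_const continuousOn_const
  have hCf : ⇑(⟨_, hf⟩ : C(Y, Z)) ⁻¹' W = C := by
    ext x
    by_cases hx : x ∈ C <;> simp [hx, hpW, hqW]
  exact ⟨V, hV, ⟨_, hf⟩, by rwa [hCf], by rwa [hCf]⟩

theorem of_t0Space_of_isClopen_basis (hA : IsEpireflectiveClass 𝒜)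
    (hT0 : ∀ (Z : Type u) (tZ : TopologicalSpace Z), 𝒜 Z tZ → @T0Space Z tZ)
    (hA2 : ∃ (Z : Type u) (tZ : TopologicalSpace Z), 𝒜 Z tZ ∧ ∃ p q : Z, p ≠ q)
    {Y X : Type u} [tY : TopologicalSpace Y] [T0Space Y] [tX : TopologicalSpace X]
    (hX : 𝒜 X tX) {g : Y → X} (hg : Continuous g)
    (hbasis : (∀ (Z : Type u) (tZ : TopologicalSpace Z), 𝒜 Z tZ → @T1Space Z tZ) →
      ∀ s, IsOpen s → ∀ y ∈ s, ∃ V, IsOpen V ∧ ∃ C, IsClopen C ∧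
        y ∈ g ⁻¹' V ∩ C ∧ g ⁻¹' V ∩ C ⊆ s) :
    𝒜 Y tY := by
  by_cases hT1 : ∀ (Z : Type u) (tZ : TopologicalSpace Z), 𝒜 Z tZ → @T1Space Z tZ
  · obtain ⟨Z, tZ, hZ, p, q, hpq⟩ := hA2
    have := hT0 Z tZ hZ
    exact hA.of_isClopen_basis hZ hpq hX hg (hbasis hT1)
  · push Not at hT1
    obtain ⟨Z, tZ, hZ, hZT1⟩ := hT1
    obtain ⟨p, q, hpq, hne⟩ : ∃ p q : Z, p ⤳ q ∧ p ≠ q := by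
      simpa [t1Space_iff_specializes_imp_eq] using hZT1
    have := hT0 Z tZ hZ
    exact hA.of_t0Space_of_specializes hZ hne hpq Y

end IsEpireflectiveClass

def PrimeFactor (X : Type u) (_a : X) : Type u := X

namespace PrimeFactor

variable {X : Type u} [tX : TopologicalSpace X] {a : X}

instance : TopologicalSpace (PrimeFactor X a) := primeFactor tX a

theorem isOpen_iff {s : Set (PrimeFactor X a)} : IsOpen s ↔ (a ∈ s → s ∈ 𝓝 a) := Iff.rfl

def toSpace : PrimeFactor X a → X := id

theorem continuous_toSpace : Continuous (toSpace : PrimeFactor X a → X) :=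
  continuous_def.2 fun (_ : Set X) hs ha => hs.mem_nhds ha

instance [T0Space X] : T0Space (PrimeFactor X a) :=
  t0Space_of_injective_of_continuous (f := toSpace) (fun _ _ h => h) continuous_toSpace

theorem exists_isClopen_subset [T1Space X] {s : Set (PrimeFactor X a)} (hs : IsOpen s) {x}
    (hx : x ∈ s) : ∃ V, IsOpen V ∧ ∃ C, IsClopen C ∧
      x ∈ toSpace ⁻¹' V ∩ C ∧ toSpace ⁻¹' V ∩ C ⊆ s := by
  by_cases hxa : x = a
  · subst x
    obtain ⟨V, hVs, hV, haV⟩ : ∃ V : Set X, V ⊆ s ∧ IsOpen V ∧ a ∈ V := mem_nhds_iff.1 (hs hx)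
    exact ⟨V, hV, Set.univ, isClopen_univ, ⟨haV, trivial⟩, fun y hy => hVs hy.1⟩
  · have hx_clopen : IsClopen ({x} : Set (PrimeFactor X a)) :=
      ⟨isOpen_compl_iff.1 (isOpen_compl_singleton.preimage continuous_toSpace),
        fun hax => absurd hax (Ne.symm hxa)⟩
    exact ⟨Set.univ, isOpen_univ, {x}, hx_clopen, by simp, by simpa using hx⟩

end PrimeFactor

def GluingFamily (X B : Type u) : Option X → Type u
  | none => X
  | some _ => B

def gluingFamilyTop {X B : Type u} (tX : TopologicalSpace X) (tB : TopologicalSpace B) :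
    ∀ o, TopologicalSpace (GluingFamily X B o)
  | none => tX
  | some _ => tB

/-- `X` with a copy of `B` attached at each of its points `x` by identifying `b` with `x`.
The point `(x, b)` stands for `x` itself and `(x, w)`, `w ≠ b`, for `w` in the copy over `x`. -/
def Glued_s5 (X B : Type u) (_b : B) : Type u := X × B

namespace Glued_s5

variable {X B : Type u} {b : B}

def glue (b : B) : (Σ o, GluingFamily X B o) → Glued_s5 X B b
  | ⟨none, x⟩ => (x, b)
  | ⟨some x, w⟩ => (x, w)

variable [tX : TopologicalSpace X] [tB : TopologicalSpace B]

instance : TopologicalSpace (Glued_s5 X B b) :=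
  .coinduced (glue b) (sigmaTop _ (gluingFamilyTop tX tB))

theorem isOpen_iff {s : Set (Glued_s5 X B b)} :
    IsOpen s ↔ IsOpen {x | (x, b) ∈ s} ∧ ∀ x, IsOpen {w | (x, w) ∈ s} := by
  rw [isOpen_coinduced, isOpen_sigmaTop_iff, Option.forall]
  rfl

theorem continuous_iff {Z : Type*} [TopologicalSpace Z] {f : Glued_s5 X B b → Z} :
    Continuous f ↔ Continuous (fun x => f (x, b)) ∧ ∀ x, Continuous (fun w => f (x, w)) := by
  rw [continuous_coinduced_dom, continuous_sigmaTop_iff, Option.forall]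
  rfl

def toProd : Glued_s5 X B b → X × B := id

theorem continuous_toProd : Continuous (toProd : Glued_s5 X B b → X × B) :=
  continuous_iff.2
    ⟨continuous_id.prodMk continuous_const, fun _ => continuous_const.prodMk continuous_id⟩

instance [T0Space X] [T0Space B] : T0Space (Glued_s5 X B b) :=
  t0Space_of_injective_of_continuous (f := toProd) (fun _ _ h => h) continuous_toProd

instance [T1Space X] [T1Space B] : T1Space (Glued_s5 X B b) :=
  t1Space_of_injective_of_continuous (f := toProd) (fun _ _ h => h) continuous_toProd

theorem isOpen_of_forall_snd_ne (hiso : ∀ w ≠ b, IsOpen {w}) {s : Set (Glued_s5 X B b)}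
    (hs : ∀ p ∈ s, p.2 ≠ b) : IsOpen s := by
  refine isOpen_iff.2 ⟨?_, fun x => isOpen_of_forall_ne_isOpen_singleton hiso
    fun hx => hs _ hx rfl⟩
  convert isOpen_empty
  exact Set.eq_empty_of_forall_notMem fun x hx => hs _ hx rfl

theorem isQuotientMap_glue :
    @IsQuotientMap _ (Glued_s5 X B b) (sigmaTop _ (gluingFamilyTop tX tB)) _ (glue b) :=
  @IsQuotientMap.mk _ _ (sigmaTop _ _) _ _ (@IsCoinducing.mk _ _ (sigmaTop _ _) _ _ rfl)
    fun p => ⟨⟨some p.1, p.2⟩, rfl⟩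

theorem exists_isClopen_subset [T1Space X] [T1Space B] (hiso : ∀ w ≠ b, IsOpen {w})
    {s : Set (Glued_s5 X B b)} (hs : IsOpen s) {p} (hp : p ∈ s) : ∃ V, IsOpen V ∧ ∃ C, IsClopen C ∧
      p ∈ (Prod.fst ∘ toProd) ⁻¹' V ∩ C ∧ (Prod.fst ∘ toProd) ⁻¹' V ∩ C ⊆ s := by
  by_cases hpb : p.2 = b
  · let V : Set X := {x | (x, b) ∈ s}
    let C : Set (Glued_s5 X B b) := s ∪ {q | q.1 ∉ V}
    have hC_open : IsOpen C := by
      refine isOpen_iff.2 ⟨?_, fun x => ?_⟩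
      · convert isOpen_univ
        exact Set.eq_univ_of_forall fun x => em ((x, b) ∈ s)
      · by_cases hx : x ∈ V
        · convert (isOpen_iff.1 hs).2 x using 1
          ext w
          exact or_iff_left (not_not.2 hx)
        · convert isOpen_univ
          exact Set.eq_univ_of_forall fun w => Or.inr hx
    -- `Cᶜ` misses the base copy of `X`, off which every point is isolated
    have hC_closed : IsClosed C := by
      refine isOpen_compl_iff.1 (isOpen_of_forall_snd_ne hiso
        fun ⟨x, w⟩ hq hwb => hq (Or.inl ?_))
      obtain rfl : w = b := hwb
      exact by_contra fun h => hq (Or.inr h)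
    refine ⟨V, (isOpen_iff.1 hs).1, C, ⟨hC_closed, hC_open⟩, ⟨?_, Or.inl hp⟩, ?_⟩
    · show (p.1, b) ∈ s
      rw [← hpb]
      exact hp
    · exact fun q ⟨hqV, hqC⟩ => hqC.resolve_right (not_not.2 hqV)
  · have hp_clopen : IsClopen {p} :=
      ⟨isClosed_singleton, isOpen_of_forall_snd_ne hiso (by simpa using hpb)⟩
    exact ⟨Set.univ, isOpen_univ, {p}, hp_clopen, by simp, by simpa using hp⟩

def fringe (a : X) : Set (Glued_s5 X B b) := insert (a, b) {p | p.2 ≠ b}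

theorem isQuotientMap_fringe (hb : ¬IsOpen {b}) (hiso : ∀ w ≠ b, IsOpen {w}) (a : X) :
    IsQuotientMap (Y := PrimeFactor X a) fun p : fringe (b := b) a => p.1.1 := by
  obtain ⟨w₀, -, hw₀⟩ := exists_ne_mem_of_not_isOpen_singleton hb isOpen_univ trivial
  refine ⟨.of_isOpen_preimage_iff_isOpen fun s => ⟨fun hs => ?_, fun hs => ?_⟩,
    fun x => ⟨⟨(x, w₀), Or.inr hw₀⟩, rfl⟩⟩
  · rw [PrimeFactor.isOpen_iff]
    intro ha
    obtain ⟨O, hO, hOs⟩ := isOpen_induced_iff.1 hs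
    have hmem (p : fringe (b := b) a) : p.1 ∈ O ↔ p.1.1 ∈ s := Set.ext_iff.1 hOs p
    let V : Set X := {x | (x, b) ∈ O}
    have haV : a ∈ V := (hmem ⟨(a, b), Or.inl rfl⟩).2 ha
    have hVs : V ⊆ s := fun x hx => by
      obtain ⟨w, hw, hwb⟩ :=
        exists_ne_mem_of_not_isOpen_singleton hb ((isOpen_iff.1 hO).2 x) hx
      exact (hmem ⟨(x, w), Or.inr hwb⟩).1 hw
    exact Filter.mem_of_superset ((isOpen_iff.1 hO).1.mem_nhds haV) hVs
  · obtain ⟨V, hV, hVs, haV⟩ : ∃ V : Set X, IsOpen V ∧ V ⊆ s ∧ (a ∈ s → a ∈ V) := by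
      by_cases ha : a ∈ s
      · obtain ⟨V, hVs, hV, haV⟩ : ∃ V : Set X, V ⊆ s ∧ IsOpen V ∧ a ∈ V :=
          mem_nhds_iff.1 (hs ha)
        exact ⟨V, hV, hVs, fun _ => haV⟩
      · exact ⟨∅, isOpen_empty, Set.empty_subset _, fun h => absurd h ha⟩
    let O : Set (Glued_s5 X B b) := {q | q.1 ∈ V} ∪ {q | q.2 ≠ b ∧ q.1 ∈ s}
    have hO : IsOpen O :=
      (hV.preimage (continuous_fst.comp continuous_toProd)).union
        (isOpen_of_forall_snd_ne hiso fun _ hq => hq.1)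
    convert hO.preimage continuous_subtype_val using 1
    ext ⟨⟨x, w⟩, hq⟩
    refine ⟨fun hx => ?_, fun h => h.elim (fun hxV => hVs hxV) And.right⟩
    rcases hq with hq | hwb
    · obtain ⟨rfl, rfl⟩ := Prod.mk.inj hq
      exact Or.inl (haV hx)
    · exact Or.inr ⟨hwb, hx⟩

end Glued_s5

namespace IsEpireflectiveClass

variable {𝒜 : SpaceClass.{u}} {X B : Type u} [tX : TopologicalSpace X] [tB : TopologicalSpace B]

theorem mem_primeFactor (hA : IsEpireflectiveClass 𝒜)
    (hT0 : ∀ (Z : Type u) (tZ : TopologicalSpace Z), 𝒜 Z tZ → @T0Space Z tZ)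
    (hA2 : ∃ (Z : Type u) (tZ : TopologicalSpace Z), 𝒜 Z tZ ∧ ∃ p q : Z, p ≠ q)
    (hX : 𝒜 X tX) (a : X) : 𝒜 (PrimeFactor X a) inferInstance := by
  have := hT0 X tX hX
  refine hA.of_t0Space_of_isClopen_basis hT0 hA2 hX (PrimeFactor.continuous_toSpace (a := a))
    fun hT1 s hs x hx => ?_
  have := hT1 X tX hX
  exact PrimeFactor.exists_isClopen_subset hs hx

theorem mem_glued (hA : IsEpireflectiveClass 𝒜)
    (hT0 : ∀ (Z : Type u) (tZ : TopologicalSpace Z), 𝒜 Z tZ → @T0Space Z tZ)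
    (hA2 : ∃ (Z : Type u) (tZ : TopologicalSpace Z), 𝒜 Z tZ ∧ ∃ p q : Z, p ≠ q)
    (hX : 𝒜 X tX) (hB : 𝒜 B tB) {b : B} (hiso : ∀ w ≠ b, IsOpen {w}) :
    𝒜 (Glued_s5 X B b) inferInstance := by
  have := hT0 X tX hX
  have := hT0 B tB hB
  refine hA.of_t0Space_of_isClopen_basis hT0 hA2 hX
    (continuous_fst.comp Glued_s5.continuous_toProd) fun hT1 s hs p hp => ?_
  have := hT1 X tX hX
  have := hT1 B tB hB
  exact Glued_s5.exists_isClopen_subset hiso hs hp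

end IsEpireflectiveClass

/-- A hereditary AD-class `ℬ` (in an epireflective class `𝒜` of T0
spaces containing a space with two points) containing at least one prime space is
closed under prime factors. -/
theorem statement5 (𝒜 ℬ : SpaceClass.{u})
    (hA : IsEpireflectiveClass 𝒜)
    (hT0 : ∀ (X : Type u) (tX : TopologicalSpace X), 𝒜 X tX → @T0Space X tX)
    (hA2 : ∃ (X : Type u) (tX : TopologicalSpace X), 𝒜 X tX ∧ ∃ x y : X, x ≠ y)
    (hB : IsADClass 𝒜 ℬ)
    (hher : IsHereditary ℬ)
    (hprime : ∃ (P : Type u) (tP : TopologicalSpace P), ℬ P tP ∧ IsPrimeSpace P tP) :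
    ∀ (X : Type u) (tX : TopologicalSpace X) (a : X),
      ℬ X tX → ℬ X (primeFactor tX a) := by
  intro X tX a hX
  obtain ⟨B, tB, hBB, b, hb, hb_unique⟩ := hprime
  have hiso : ∀ w ≠ b, IsOpen {w} := fun w hw => not_not.1 (mt (hb_unique w) hw)
  have hXA := hB.subset X tX hX
  have hglued : ℬ (Glued_s5 X B b) inferInstance :=
    hB.divisible _ _ _ _ (Glued_s5.glue b)
      (hB.sums _ _ (gluingFamilyTop tX tB) fun | none => hX | some _ => hBB)
      (hA.mem_glued hT0 hA2 hXA (hB.subset B tB hBB) hiso) Glued_s5.isQuotientMap_glue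
  have hfringe := hher _ _ (Glued_s5.fringe a) ⟨(a, b), Or.inl rfl⟩ hglued
  exact hB.divisible _ _ _ _ _ hfringe (hA.mem_primeFactor hT0 hA2 hXA a)
    (Glued_s5.isQuotientMap_fringe hb hiso a)
end

section
/- Let X be a Hausdorff topological space which is not discrete. Then X contains a subspace Y (a subset with the subspace topology) such that there exist a Hausdorff prime space P and a quotient map q : Y → P. -/
open Topology

universe u v w

/-- Every non-discrete Hausdorff space `X` contains a subspace `Y` that
admits a quotient map onto some Hausdorff prime space `P`. -/
theorem statement6 {X : Type u} [TopologicalSpace X] [T2Space X]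
    (hnd : ¬ ∀ x : X, IsOpen ({x} : Set X)) :
    ∃ (Y : Set X) (P : Type u) (tP : TopologicalSpace P) (q : Y → P),
      @T2Space P tP ∧ IsPrimeSpace P tP ∧ @IsQuotientMap Y P _ tP q := by
  classical
  push_neg at hnd
  obtain ⟨a, ha⟩ := hnd
  have hacc : ∀ V : Set X, IsOpen V → a ∈ V → ∃ b ∈ V, b ≠ a := by
    intro V hV haV
    by_contra h
    push_neg at h
    have hVa : V = {a} := Set.eq_singleton_iff_unique_mem.mpr ⟨haV, fun b hb => h b hb⟩
    exact ha (hVa ▸ hV)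
  set 𝒞 : Set (Set (Set X)) := {𝒰 | (∀ U ∈ 𝒰, IsOpen U ∧ U.Nonempty ∧ a ∉ closure U) ∧
      ∀ U ∈ 𝒰, ∀ V ∈ 𝒰, U ≠ V → U ∩ V = ∅} with h𝒞
  obtain ⟨𝒰, hmax⟩ := zorn_subset 𝒞 (by
    intro c hc hchain
    refine ⟨⋃₀ c, ⟨?_, ?_⟩, fun s hs => Set.subset_sUnion_of_mem hs⟩
    · rintro U ⟨t, htc, hUt⟩
      exact (hc htc).1 U hUt
    · rintro U ⟨t, htc, hUt⟩ V ⟨t', ht'c, hVt'⟩ hUV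
      rcases hchain.total htc ht'c with h | h
      · exact (hc ht'c).2 U (h hUt) V hVt' hUV
      · exact (hc htc).2 U hUt V (h hVt') hUV)
  have h𝒰 : 𝒰 ∈ 𝒞 := hmax.1
  have hprop : ∀ U ∈ 𝒰, IsOpen U ∧ U.Nonempty ∧ a ∉ closure U := h𝒰.1
  have hdisj : ∀ U ∈ 𝒰, ∀ V ∈ 𝒰, U ≠ V → U ∩ V = ∅ := h𝒰.2
  have hclo : a ∈ closure (⋃₀ 𝒰) := by
    rw [mem_closure_iff]
    intro W hW haW
    by_contra hempty
    rw [Set.not_nonempty_iff_eq_empty] at hempty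
    obtain ⟨b, hbW, hba⟩ := hacc W hW haW
    obtain ⟨U, V, hU, hV, hbU, haV, hUV⟩ := t2_separation hba
    set U' := U ∩ W with hU'
    have hU'open : IsOpen U' := hU.inter hW
    have haU' : a ∉ closure U' := by
      intro hmem
      rcases mem_closure_iff.1 hmem V hV haV with ⟨z, hzV, hzU, _⟩
      exact Set.disjoint_left.1 hUV hzU hzV
    have hU'new : U' ∉ 𝒰 := by
      intro hmem
      have h1 : b ∈ (⋃₀ 𝒰) := Set.subset_sUnion_of_mem hmem ⟨hbU, hbW⟩
      have h2 : b ∈ W ∩ ⋃₀ 𝒰 := ⟨hbW, h1⟩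
      rw [hempty] at h2; exact h2
    have hins : insert U' 𝒰 ∈ 𝒞 := by
      constructor
      · rintro V' (rfl | hV')
        · exact ⟨hU'open, ⟨b, hbU, hbW⟩, haU'⟩
        · exact hprop V' hV'
      · rintro V' (rfl | hV') V'' (rfl | hV'') hne
        · exact absurd rfl hne
        · apply Set.eq_empty_of_subset_empty
          intro z hz
          have h2 : z ∈ W ∩ ⋃₀ 𝒰 := ⟨hz.1.2, Set.subset_sUnion_of_mem hV'' hz.2⟩
          rw [hempty] at h2; exact h2
        · apply Set.eq_empty_of_subset_empty
          intro z hz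
          have h2 : z ∈ W ∩ ⋃₀ 𝒰 := ⟨hz.2.2, Set.subset_sUnion_of_mem hV' hz.1⟩
          rw [hempty] at h2; exact h2
        · exact hdisj V' hV' V'' hV'' hne
    exact hU'new (hmax.2 hins (Set.subset_insert _ _) (Set.mem_insert _ _))
  set Y : Set X := insert a (⋃₀ 𝒰) with hY
  have haY : a ∈ Y := Set.mem_insert _ _
  have haU : ∀ U ∈ 𝒰, a ∉ U := fun U hU h => (hprop U hU).2.2 (subset_closure h)
  set r : Y → Y → Prop := fun y z => y = z ∨ ∃ U ∈ 𝒰, (y : X) ∈ U ∧ (z : X) ∈ U with hr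
  have hUeq : ∀ {U V : Set X}, U ∈ 𝒰 → V ∈ 𝒰 → ∀ {z : X}, z ∈ U → z ∈ V → U = V := by
    intro U V hU hV z hzU hzV
    by_contra hne
    have h0 : z ∈ U ∩ V := ⟨hzU, hzV⟩
    rw [hdisj U hU V hV hne] at h0
    exact h0
  have requiv : Equivalence r := by
    constructor
    · intro y; exact Or.inl rfl
    · rintro y z (rfl | ⟨U, hU, hy, hz⟩)
      · exact Or.inl rfl
      · exact Or.inr ⟨U, hU, hz, hy⟩
    · rintro y z w (rfl | ⟨U, hU, hy, hz⟩) h2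
      · exact h2
      · rcases h2 with rfl | ⟨V, hV, hz', hw⟩
        · exact Or.inr ⟨U, hU, hy, hz⟩
        · exact Or.inr ⟨U, hU, hy, (hUeq hU hV hz hz') ▸ hw⟩
  set s : Setoid Y := ⟨r, requiv⟩ with hs
  have key1 : ∀ z : Y, Quotient.mk s z = Quotient.mk s ⟨a, haY⟩ → z = ⟨a, haY⟩ := by
    intro z h
    rcases Quotient.eq''.1 h with h | ⟨U, hU, _, h2⟩
    · exact h
    · exact absurd h2 (haU U hU)
  have key2 : ∀ (y : Y) (U : Set X), U ∈ 𝒰 → (y : X) ∈ U →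
      (Quotient.mk s) ⁻¹' {Quotient.mk s y} = (Subtype.val : Y → X) ⁻¹' U := by
    intro y U hU hy
    ext z
    simp only [Set.mem_preimage, Set.mem_singleton_iff]
    constructor
    · intro h
      rcases Quotient.eq''.1 h with rfl | ⟨V, hV, hz, hy'⟩
      · exact hy
      · exact (hUeq hV hU hy' hy) ▸ hz
    · intro h
      exact Quotient.sound' (Or.inr ⟨U, hU, h, hy⟩)
  have keya : ∀ y : Y, (y : X) = a ∨ ∃ U ∈ 𝒰, (y : X) ∈ U := by
    rintro ⟨y, rfl | ⟨U, hU, hy⟩⟩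
    · exact Or.inl rfl
    · exact Or.inr ⟨U, hU, hy⟩
  -- the a-class singleton is not open
  have hnotopen : ¬ IsOpen ({Quotient.mk s ⟨a, haY⟩} : Set (Quotient s)) := by
    intro hopen
    have hpre : IsOpen ((Quotient.mk s) ⁻¹' {Quotient.mk s ⟨a, haY⟩}) :=
      hopen.preimage continuous_quotient_mk'
    have hpeq : (Quotient.mk s) ⁻¹' {Quotient.mk s ⟨a, haY⟩} = {⟨a, haY⟩} := by
      ext z
      simp only [Set.mem_preimage, Set.mem_singleton_iff]
      exact ⟨key1 z, fun h => h ▸ rfl⟩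
    rw [hpeq, isOpen_induced_iff] at hpre
    obtain ⟨V, hV, hVeq⟩ := hpre
    have haV : a ∈ V := by
      have h1 : (⟨a, haY⟩ : Y) ∈ (Subtype.val ⁻¹' V : Set Y) := hVeq ▸ rfl
      exact h1
    obtain ⟨z, hzV, hzU⟩ := mem_closure_iff.1 hclo V hV haV
    have hzY : z ∈ Y := Set.mem_insert_iff.mpr (Or.inr hzU)
    have h1 : (⟨z, hzY⟩ : Y) ∈ (Subtype.val ⁻¹' V : Set Y) := hzV
    rw [hVeq] at h1
    have hza : z = a := congrArg Subtype.val h1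
    obtain ⟨U, hU, hzU'⟩ := hzU
    exact haU U hU (hza ▸ hzU')
  -- every other singleton is open
  have hopen : ∀ p : Quotient s, p ≠ Quotient.mk s ⟨a, haY⟩ →
      IsOpen ({p} : Set (Quotient s)) := by
    intro p hp
    obtain ⟨y, rfl⟩ := Quotient.exists_rep p
    rcases keya y with hya | ⟨U, hU, hy⟩
    · exact absurd (by rw [show y = ⟨a, haY⟩ from Subtype.ext hya]) hp
    · rw [← isQuotientMap_quotient_mk'.isOpen_preimage,
        show (Quotient.mk' : Y → Quotient s) = Quotient.mk s from rfl, key2 y U hU hy]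
      exact (hprop U hU).1.preimage continuous_subtype_val
  -- complements of non-a singletons are open
  have hcopen : ∀ p : Quotient s, p ≠ Quotient.mk s ⟨a, haY⟩ →
      IsOpen ({p}ᶜ : Set (Quotient s)) := by
    intro p hp
    obtain ⟨y, rfl⟩ := Quotient.exists_rep p
    rcases keya y with hya | ⟨U, hU, hy⟩
    · exact absurd (by rw [show y = ⟨a, haY⟩ from Subtype.ext hya]) hp
    · rw [← isQuotientMap_quotient_mk'.isOpen_preimage,
        show (Quotient.mk' : Y → Quotient s) = Quotient.mk s from rfl, Set.preimage_compl,
        key2 y U hU hy]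
      have hWopen : IsOpen ((closure U)ᶜ ∪ ⋃₀ (𝒰 \ {U})) :=
        (isClosed_closure.isOpen_compl).union
          (isOpen_sUnion fun V hV => (hprop V hV.1).1)
      have heq : ((Subtype.val : Y → X) ⁻¹' U)ᶜ =
          (Subtype.val : Y → X) ⁻¹' ((closure U)ᶜ ∪ ⋃₀ (𝒰 \ {U})) := by
        ext z
        simp only [Set.mem_compl_iff, Set.mem_preimage, Set.mem_union]
        constructor
        · intro hz
          rcases keya z with hza | ⟨V, hV, hzV⟩
          · exact Or.inl (hza ▸ (hprop U hU).2.2)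
          · have hne : V ≠ U := fun h => hz (h ▸ hzV)
            exact Or.inr ⟨V, ⟨hV, hne⟩, hzV⟩
        · rintro (hz | ⟨V, ⟨hV, hne⟩, hzV⟩) hzU
          · exact hz (subset_closure hzU)
          · exact hne (hUeq hV hU hzV hzU)
      rw [heq]
      exact hWopen.preimage continuous_subtype_val
  refine ⟨Y, Quotient s, inferInstance, Quotient.mk s, ?_, ?_, isQuotientMap_quotient_mk'⟩
  · -- T2
    constructor
    intro p q hpq
    by_cases hp : p = Quotient.mk s ⟨a, haY⟩
    · have hq : q ≠ Quotient.mk s ⟨a, haY⟩ := fun h => hpq (hp.trans h.symm)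
      exact ⟨{q}ᶜ, {q}, hcopen q hq, hopen q hq, hpq, rfl, disjoint_compl_left⟩
    · by_cases hq : q = Quotient.mk s ⟨a, haY⟩
      · exact ⟨{p}, {p}ᶜ, hopen p hp, hcopen p hp, rfl, fun h => hpq h.symm,
          disjoint_compl_right⟩
      · exact ⟨{p}, {q}, hopen p hp, hopen q hq, rfl, rfl,
          Set.disjoint_singleton.mpr hpq⟩
  · -- prime
    refine ⟨Quotient.mk s ⟨a, haY⟩, hnotopen, ?_⟩
    intro p hpn
    by_contra hne
    exact hpn (hopen p hne)
end

section
/- Let X be a topological space which is not a topological sum of connected spaces, i.e., there exists a point a ∈ X such that no open neighbourhood of a is connected. Then there exist a Hausdorff prime space P and a quotient map f : X → P. -/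
open Topology

universe u v w

/-! By Zorn's lemma there is a maximal family `𝓕` of pairwise disjoint clopen sets not
containing `a`. Its remainder `C = X \ ⋃₀ 𝓕` contains `a` and is not open: otherwise `C` would be
a clopen, hence disconnected, neighbourhood of `a`, and a nonempty clopen piece of `C` missing `a`
could be added to `𝓕`. Collapsing `C` and each member of `𝓕` to a point gives a quotient in which
every point other than `C` is clopen, so it is Hausdorff and `C` is its only non-isolated point. -/

open Set

section SingularPoint

variable {P : Type*} [TopologicalSpace P]

theorem t2Space_of_isClopen_singleton_of_ne (p₀ : P) (h : ∀ p ≠ p₀, IsClopen {p}) :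
    T2Space P := by
  have separate : ∀ p q, p ≠ q → p ≠ p₀ →
      ∃ u v : Set P, IsOpen u ∧ IsOpen v ∧ p ∈ u ∧ q ∈ v ∧ Disjoint u v :=
    fun p q hpq hp => ⟨{p}, {p}ᶜ, (h p hp).isOpen, (h p hp).compl.isOpen, rfl, hpq.symm,
      disjoint_compl_right⟩
  refine ⟨fun p q hpq => ?_⟩
  by_cases hp : p = p₀
  · subst hp
    obtain ⟨u, v, hu, hv, hqu, hpv, huv⟩ := separate q p hpq.symm hpq.symm
    exact ⟨v, u, hv, hu, hpv, hqu, huv.symm⟩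
  · exact separate p q hpq hp

theorem isPrimeSpace_of_isClopen_singleton_of_ne (p₀ : P) (h₀ : ¬IsOpen {p₀})
    (h : ∀ p ≠ p₀, IsClopen {p}) : IsPrimeSpace P ‹_› :=
  ⟨p₀, h₀, fun p hp => not_not.1 fun hne => hp (h p hne).isOpen⟩

end SingularPoint

section ClopenPartition

variable {X : Type*} {𝓕 : Set (Set X)}

def membershipSetoid (𝓕 : Set (Set X)) : Setoid X :=
  Setoid.ker fun x => {F ∈ 𝓕 | x ∈ F}

namespace membershipSetoid

theorem mk_eq_mk_iff {x y : X} :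
    (⟦y⟧ : Quotient (membershipSetoid 𝓕)) = ⟦x⟧ ↔ {F ∈ 𝓕 | y ∈ F} = {F ∈ 𝓕 | x ∈ F} :=
  Quotient.eq

theorem preimage_mk_singleton_of_mem (h𝓕 : 𝓕.PairwiseDisjoint id) {F : Set X} (hF : F ∈ 𝓕)
    {x : X} (hx : x ∈ F) : Quotient.mk (membershipSetoid 𝓕) ⁻¹' {⟦x⟧} = F := by
  ext y
  rw [mem_preimage, mem_singleton_iff, mk_eq_mk_iff]
  constructor
  · intro hyx
    exact (hyx ▸ ⟨hF, hx⟩ : F ∈ {G ∈ 𝓕 | y ∈ G}).2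
  · intro hy
    ext G
    refine and_congr_right fun hG => ⟨fun hyG => ?_, fun hxG => ?_⟩
    · exact h𝓕.elim_set hG hF y hyG hy ▸ hx
    · exact h𝓕.elim_set hG hF x hxG hx ▸ hy

theorem preimage_mk_singleton_of_notMem {x : X} (hx : x ∉ ⋃₀ 𝓕) :
    Quotient.mk (membershipSetoid 𝓕) ⁻¹' {⟦x⟧} = (⋃₀ 𝓕)ᶜ := by
  have hx' : {F ∈ 𝓕 | x ∈ F} = ∅ := eq_empty_of_forall_notMem fun F hF => hx ⟨F, hF.1, hF.2⟩
  ext y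
  rw [mem_preimage, mem_singleton_iff, mk_eq_mk_iff, hx', eq_empty_iff_forall_notMem]
  simp

theorem not_isOpen_singleton_mk [TopologicalSpace X] {x : X} (hx : x ∉ ⋃₀ 𝓕)
    (hC : ¬IsOpen (⋃₀ 𝓕)ᶜ) :
    ¬IsOpen {(⟦x⟧ : Quotient (membershipSetoid 𝓕))} :=
  fun h => hC (preimage_mk_singleton_of_notMem hx ▸ h.preimage continuous_quotient_mk')

theorem isClopen_singleton_of_ne_mk [TopologicalSpace X] (h𝓕 : 𝓕.PairwiseDisjoint id)
    (hclopen : ∀ F ∈ 𝓕, IsClopen F) {a : X} (ha : a ∉ ⋃₀ 𝓕) :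
    ∀ p ≠ (⟦a⟧ : Quotient (membershipSetoid 𝓕)), IsClopen {p} := by
  refine Quotient.ind fun x hx => ?_
  obtain ⟨F, hF, hxF⟩ : x ∈ ⋃₀ 𝓕 := by
    by_contra hx'
    have hxa : x ∈ Quotient.mk (membershipSetoid 𝓕) ⁻¹' {⟦a⟧} := by
      rwa [preimage_mk_singleton_of_notMem ha]
    exact hx hxa
  exact isQuotientMap_quotient_mk'.isClopen_preimage.1
    (preimage_mk_singleton_of_mem h𝓕 hF hxF ▸ hclopen F hF)

end membershipSetoid

end ClopenPartition

section MaximalClopenFamily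

variable {X : Type*} [TopologicalSpace X]

theorem IsClopen.exists_isClopen_subset_notMem {C : Set X} (hC : IsClopen C)
    (hCpre : ¬IsPreconnected C) (a : X) :
    ∃ W, IsClopen W ∧ W ⊆ C ∧ a ∉ W ∧ W.Nonempty := by
  obtain ⟨u, v, hu, hv, hune, hvne, huv, rfl⟩ := hC.not_isPreconnected_iff.1 hCpre
  by_cases hau : a ∈ u
  · exact ⟨v, hv, subset_union_right, huv.notMem_of_mem_left hau, hvne⟩
  · exact ⟨u, hu, subset_union_left, hau, hune⟩

theorem exists_pairwiseDisjoint_isClopen_not_isOpen_compl_sUnion (a : X)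
    (h : ∀ U : Set X, IsOpen U → a ∈ U → ¬IsConnected U) :
    ∃ 𝓕 : Set (Set X), 𝓕.PairwiseDisjoint id ∧ (∀ F ∈ 𝓕, IsClopen F) ∧ a ∉ ⋃₀ 𝓕 ∧
      ¬IsOpen (⋃₀ 𝓕)ᶜ := by
  let S : Set (Set (Set X)) := {𝓕 | 𝓕.PairwiseDisjoint id ∧ ∀ F ∈ 𝓕, IsClopen F ∧ a ∉ F}
  obtain ⟨𝓕, ⟨hdisj, hF⟩, hmax⟩ := zorn_subset S fun c hcS hc =>
    ⟨⋃₀ c, ⟨(hc.pairwiseDisjoint_sUnion id).2 fun 𝓖 h𝓖 => (hcS h𝓖).1,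
      fun F ⟨𝓖, h𝓖, hF⟩ => (hcS h𝓖).2 F hF⟩, fun _ => subset_sUnion_of_mem⟩
  have ha : a ∉ ⋃₀ 𝓕 := fun ⟨F, hF', haF⟩ => (hF F hF').2 haF
  refine ⟨𝓕, hdisj, fun F hF' => (hF F hF').1, ha, fun hopen => ?_⟩
  have hC : IsClopen (⋃₀ 𝓕)ᶜ :=
    ⟨(isOpen_sUnion fun F hF' => (hF F hF').1.isOpen).isClosed_compl, hopen⟩
  obtain ⟨W, hW, hWC, haW, hWne⟩ :=
    hC.exists_isClopen_subset_notMem (fun hpre => h _ hopen ha ⟨⟨a, ha⟩, hpre⟩) a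
  have hWdisj : ∀ F ∈ 𝓕, Disjoint W F := fun F hF' =>
    disjoint_compl_left.mono hWC (subset_sUnion_of_mem hF')
  have hWS : insert W 𝓕 ∈ S :=
    ⟨hdisj.insert fun F hF' _ => hWdisj F hF',
      forall_mem_insert.2 ⟨⟨hW, haW⟩, hF⟩⟩
  have hW𝓕 : W ∈ 𝓕 := hmax hWS (subset_insert W 𝓕) (mem_insert W 𝓕)
  exact hWne.ne_empty ((hWdisj W hW𝓕).eq_bot_of_self)

end MaximalClopenFamily

/-- If some point `a` of `X` has no connected open neighbourhood
(i.e. `X` is not a topological sum of connected spaces), then there is a quotient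
map from `X` onto a Hausdorff prime space. -/
theorem statement11 {X : Type u} [TopologicalSpace X] (a : X)
    (h : ∀ U : Set X, IsOpen U → a ∈ U → ¬ IsConnected U) :
    ∃ (P : Type u) (tP : TopologicalSpace P) (f : X → P),
      @T2Space P tP ∧ IsPrimeSpace P tP ∧ @IsQuotientMap X P _ tP f := by
  obtain ⟨𝓕, hdisj, hclopen, ha, hC⟩ :=
    exists_pairwiseDisjoint_isClopen_not_isOpen_compl_sUnion a h
  have hsingleton := membershipSetoid.isClopen_singleton_of_ne_mk hdisj hclopen ha
  have hnonisolated := membershipSetoid.not_isOpen_singleton_mk ha hC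
  exact ⟨Quotient (membershipSetoid 𝓕), inferInstance, Quotient.mk _,
    t2Space_of_isClopen_singleton_of_ne _ hsingleton,
    isPrimeSpace_of_isClopen_singleton_of_ne _ hnonisolated hsingleton,
    isQuotientMap_quotient_mk'⟩
end

section
/- Let X be a totally disconnected topological space (all connected components of X are singletons) which is not discrete. Then there exist a Hausdorff prime space P and a quotient map f : X → P. -/
open Topology

universe u v w

/-- A non-discrete totally disconnected space admits a quotient map
onto a Hausdorff prime space. -/
theorem statement12 {X : Type u} [TopologicalSpace X]
    (htd : ∀ x : X, connectedComponent x = {x})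
    (hnd : ¬ ∀ x : X, IsOpen ({x} : Set X)) :
    ∃ (P : Type u) (tP : TopologicalSpace P) (f : X → P),
      @T2Space P tP ∧ IsPrimeSpace P tP ∧ @IsQuotientMap X P _ tP f := by
  classical
  push_neg at hnd
  obtain ⟨a, ha⟩ := hnd
  -- Zorn: maximal pairwise disjoint family of nonempty clopen sets avoiding `a`
  set S : Set (Set (Set X)) :=
    {𝒟 | (∀ C ∈ 𝒟, IsClopen C ∧ C.Nonempty ∧ a ∉ C) ∧ 𝒟.PairwiseDisjoint id} with hSdef
  obtain ⟨𝒟, h𝒟⟩ := zorn_subset S (fun c hcS hchain => by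
    refine ⟨⋃₀ c, ⟨?_, ?_⟩, fun s hs => Set.subset_sUnion_of_mem hs⟩
    · rintro C ⟨𝒟₁, h1, hC1⟩
      exact (hcS h1).1 C hC1
    · rintro C ⟨𝒟₁, h1, hC1⟩ C' ⟨𝒟₂, h2, hC2⟩ hne
      rcases hchain.total h1 h2 with h | h
      · exact (hcS h2).2 (h hC1) hC2 hne
      · exact (hcS h1).2 hC1 (h hC2) hne)
  have hmem : 𝒟 ∈ S := h𝒟.1
  set U : Set X := ⋃₀ 𝒟 with hUdef
  have hUopen : IsOpen U := isOpen_sUnion fun D hD => (hmem.1 D hD).1.isOpen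
  have haU : a ∉ U := fun ⟨D, hD, haD⟩ => (hmem.1 D hD).2.2 haD
  -- U is not closed
  have hUnotclosed : ¬ IsClosed U := by
    intro hUcl
    have hsub : ∀ C : Set X, IsClopen C → a ∉ C → C ⊆ U := by
      intro C hC haC x hx
      by_contra hxU
      have hC' : IsClopen (C \ U) := hC.diff ⟨hUcl, hUopen⟩
      have hdisj : ∀ D ∈ 𝒟, Disjoint (C \ U) D := by
        intro D hD
        exact Set.disjoint_left.2 fun z hz hzD => hz.2 ⟨D, hD, hzD⟩
      have hinS : insert (C \ U) 𝒟 ∈ S := by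
        constructor
        · rintro D (rfl | hD)
          · exact ⟨hC', ⟨x, hx, hxU⟩, fun h => haC h.1⟩
          · exact hmem.1 D hD
        · refine hmem.2.insert fun D hD _ => ?_
          exact hdisj D hD
      have hCU : C \ U ∈ 𝒟 := h𝒟.2 hinS (Set.subset_insert _ _) (Set.mem_insert _ _)
      exact hxU ⟨C \ U, hCU, hx, hxU⟩
    have hQopen : IsOpen Uᶜ := hUcl.isOpen_compl
    have hQclosed : IsClosed Uᶜ := hUopen.isClosed_compl
    have key : ∀ s t : Set X, IsClosed s → IsClosed t → Uᶜ ⊆ s ∪ t → Disjoint s t →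
        a ∈ s → Uᶜ ⊆ s := by
      intro s t hscl htcl hcover hdisj has
      have hBeq : Uᶜ ∩ t = Uᶜ ∩ sᶜ := by
        apply Set.Subset.antisymm
        · rintro z ⟨hz1, hz2⟩
          exact ⟨hz1, fun hzs => (Set.disjoint_left.1 hdisj) hzs hz2⟩
        · rintro z ⟨hz1, hz2⟩
          rcases hcover hz1 with h | h
          · exact absurd h hz2
          · exact ⟨hz1, h⟩
      have hB : IsClopen (Uᶜ ∩ t) := by
        refine ⟨hQclosed.inter htcl, ?_⟩
        rw [hBeq]; exact hQopen.inter hscl.isOpen_compl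
      have haB : a ∉ Uᶜ ∩ t := fun h => (Set.disjoint_left.1 hdisj) has h.2
      have : Uᶜ ∩ t ⊆ U := hsub _ hB haB
      have hBempty : Uᶜ ∩ t = ∅ := by
        ext z; simp only [Set.mem_empty_iff_false, iff_false]
        rintro ⟨hz1, hz2⟩; exact hz1 (this ⟨hz1, hz2⟩)
      intro z hz
      rcases hcover hz with h | h
      · exact h
      · exact absurd (Set.eq_empty_iff_forall_notMem.1 hBempty z ⟨hz, h⟩) not_false
    have hpre : IsPreconnected (Uᶜ : Set X) := by
      rw [isPreconnected_iff_subset_of_fully_disjoint_closed hQclosed]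
      intro s t hscl htcl hcover hdisj
      by_cases has : a ∈ s
      · exact Or.inl (key s t hscl htcl hcover hdisj has)
      · refine Or.inr (key t s htcl hscl ?_ hdisj.symm ?_)
        · intro z hz; rcases hcover hz with h | h
          · exact Or.inr h
          · exact Or.inl h
        · rcases hcover haU with h | h
          · exact absurd h has
          · exact h
    have hsub' : (Uᶜ : Set X) ⊆ {a} := by
      have := hpre.subset_connectedComponent (show a ∈ (Uᶜ : Set X) from haU)
      rwa [htd a] at this
    have heq : (Uᶜ : Set X) = {a} :=
      Set.Subset.antisymm hsub' (Set.singleton_subset_iff.2 haU)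
    exact ha (heq ▸ hQopen)
  -- the quotient
  set r : Setoid X := ⟨fun x y => ∀ D ∈ 𝒟, (x ∈ D ↔ y ∈ D),
    ⟨fun x D hD => Iff.rfl, fun h D hD => (h D hD).symm,
      fun h1 h2 D hD => (h1 D hD).trans (h2 D hD)⟩⟩ with hrdef
  set f : X → Quotient r := Quotient.mk r with hfdef
  have hq : IsQuotientMap f := isQuotientMap_quot_mk
  -- fibers
  have hfib1 : ∀ D ∈ 𝒟, ∀ x ∈ D, f ⁻¹' {f x} = D := by
    intro D hD x hx
    ext z
    simp only [Set.mem_preimage, Set.mem_singleton_iff, hfdef, Quotient.eq]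
    constructor
    · intro h; exact (h D hD).2 hx
    · intro hz D' hD'
      by_cases hDD' : D = D'
      · subst hDD'; exact iff_of_true hz hx
      · have hdj := hmem.2 hD' hD (fun h => hDD' h.symm)
        exact iff_of_false (fun h => Set.disjoint_left.1 hdj h hz)
          (fun h => Set.disjoint_left.1 hdj h hx)
  have hfib2 : ∀ x : X, x ∉ U → f ⁻¹' {f x} = Uᶜ := by
    intro x hxU
    ext z
    simp only [Set.mem_preimage, Set.mem_singleton_iff, hfdef, Quotient.eq, Set.mem_compl_iff]
    constructor
    · rintro h ⟨D, hD, hzD⟩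
      exact hxU ⟨D, hD, (h D hD).1 hzD⟩
    · intro hz D hD
      exact iff_of_false (fun h => hz ⟨D, hD, h⟩) (fun h => hxU ⟨D, hD, h⟩)
  have hopen1 : ∀ D ∈ 𝒟, ∀ x ∈ D, IsOpen ({f x} : Set (Quotient r)) := by
    intro D hD x hx
    rw [← hq.isOpen_preimage, hfib1 D hD x hx]
    exact (hmem.1 D hD).1.isOpen
  -- T2
  have hT2 : T2Space (Quotient r) := by
    constructor
    intro p q hpq
    obtain ⟨x, rfl⟩ := Quotient.exists_rep p
    obtain ⟨y, rfl⟩ := Quotient.exists_rep q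
    have hxy : ¬ (∀ D ∈ 𝒟, (x ∈ D ↔ y ∈ D)) := fun h => hpq (Quotient.sound h)
    push_neg at hxy
    obtain ⟨D, hD, hnotiff⟩ := hxy
    have hDcl := hmem.1 D hD
    -- helper : if w ∈ D and v ∉ D, separate ⟦w⟧ and ⟦v⟧
    have sep : ∀ w v : X, w ∈ D → v ∉ D → ∃ u₁ u₂ : Set (Quotient r), IsOpen u₁ ∧ IsOpen u₂ ∧
        (⟦w⟧ : Quotient r) ∈ u₁ ∧ (⟦v⟧ : Quotient r) ∈ u₂ ∧ Disjoint u₁ u₂ := by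
      intro w v hw hv
      refine ⟨f ⁻¹' {f w} |>.image f, (f '' D)ᶜ, ?_, ?_, ?_, ?_, ?_⟩
      · rw [← hq.isOpen_preimage]
        have : f ⁻¹' (f '' (f ⁻¹' {f w})) = f ⁻¹' {f w} := by
          apply Set.Subset.antisymm
          · rintro z ⟨z', hz', hzz'⟩
            simpa [← hzz'] using hz'
          · exact Set.subset_preimage_image f _
        rw [this, hfib1 D hD w hw]
        exact hDcl.1.isOpen
      · rw [← hq.isOpen_preimage, Set.preimage_compl]
        have : f ⁻¹' (f '' D) = D := by
          apply Set.Subset.antisymm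
          · rintro z ⟨z', hz', hzz'⟩
            have := Quotient.exact hzz'
            exact (this D hD).1 hz'
          · exact Set.subset_preimage_image f D
        rw [this]
        exact hDcl.1.isClosed.isOpen_compl
      · exact ⟨w, rfl, rfl⟩
      · intro hmemv
        obtain ⟨z, hz, hzv⟩ := hmemv
        have := Quotient.exact hzv
        exact hv ((this D hD).1 hz)
      · refine Set.disjoint_left.2 ?_
        rintro p ⟨z, hz, rfl⟩ hp
        apply hp
        have hzD : z ∈ D := by rw [hfib1 D hD w hw] at hz; exact hz
        exact ⟨z, hzD, rfl⟩
    rcases hnotiff with ⟨hx, hy⟩ | ⟨hx, hy⟩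
    · exact sep x y hx hy
    · obtain ⟨u₁, u₂, hu₁, hu₂, hw1, hv2, hdisj⟩ := sep y x hy hx
      exact ⟨u₂, u₁, hu₂, hu₁, hv2, hw1, hdisj.symm⟩
  -- prime space
  have hPrime : IsPrimeSpace (Quotient r) inferInstance := by
    refine ⟨f a, ?_, ?_⟩
    · intro hop
      rw [← hq.isOpen_preimage, hfib2 a haU] at hop
      exact hUnotclosed (isOpen_compl_iff.1 hop)
    · intro q hqno
      obtain ⟨x, rfl⟩ := Quotient.exists_rep q
      by_cases hxU : x ∈ U
      · obtain ⟨D, hD, hxD⟩ := hxU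
        exact absurd (hopen1 D hD x hxD) hqno
      · apply Quotient.sound
        intro D hD
        exact iff_of_false (fun h => hxU ⟨D, hD, h⟩) (fun h => haU ⟨D, hD, h⟩)
  exact ⟨Quotient r, inferInstance, f, hT2, hPrime, hq⟩
end

section
/- Let κ be an infinite regular cardinal and let C_κ be the associated space on the set of ordinals ξ ≤ o, where o is the initial ordinal of κ. Let τ be a topology on the same set which is finer than the topology of C_κ and in which the top point o is not isolated (so the space Y = (underlying set of C_κ, τ) is a prime space with accumulation point o). Then there exist an index type I and a quotient map from the topological sum of I copies of Y onto C_κ (i.e., C_κ belongs to the coreflective hull of Y in Top). -/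
/-!
Index the sum by the continuous self-maps `f` of `C_κ` and send `(f, x)` to `f x`; this is
continuous because `τ` is finer than `C_κ`, and surjective via `f = id`. If `U` is not open in
`C_κ`, then `U` contains the top point but no tail, so every `ξ` can be pushed up to some
`f ξ ≥ ξ` outside `U`. Such an inflationary `f` fixing the top point is continuous on `C_κ`,
and `f ⁻¹' U` is the singleton of the top point, which is not open in `τ`.
-/

open Topology

universe u v w

/-- The space `C_α` on the set of ordinals `ξ ≤ α.ord`: every `ξ < α.ord` is isolated
and the tails `B_β = {ξ | β ≤ ξ ≤ α.ord}`, for `β < α.ord`, form a neighbourhood base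
at the top point `α.ord`. -/
def CTop (α : Cardinal.{u}) : TopologicalSpace {ξ : Ordinal.{u} // ξ ≤ α.ord} :=
  TopologicalSpace.generateFrom
    ({U | ∃ x : {ξ : Ordinal.{u} // ξ ≤ α.ord}, x.1 < α.ord ∧ U = {x}} ∪
     {U | ∃ β : Ordinal.{u}, β < α.ord ∧
        U = {x : {ξ : Ordinal.{u} // ξ ≤ α.ord} | β ≤ x.1}})

theorem isQuotientMap_sigmaTop_of_forall {ι : Type v} {X : Type w} {Z : Type*}
    (tX : TopologicalSpace X) (tZ : TopologicalSpace Z) (g : ι → X → Z)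
    (hsurj : ∀ z, ∃ i x, g i x = z) (hcont : ∀ i, Continuous[tX, tZ] (g i))
    (hopen : ∀ U : Set Z, (∀ i, IsOpen[tX] (g i ⁻¹' U)) → IsOpen[tZ] U) :
    @IsQuotientMap _ _ (sigmaTop (fun _ : ι => X) fun _ => tX) tZ (fun p => g p.1 p.2) := by
  refine @IsQuotientMap.mk _ _ (sigmaTop _ _) tZ _ ⟨?_⟩ ?_
  · ext U
    rw [isOpen_coinduced]
    refine ⟨fun hU => isOpen_iSup_iff.mpr fun i => (hcont i).isOpen_preimage U hU,
      fun hU => hopen U fun i => isOpen_iSup_iff.mp hU i⟩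
  · intro z
    obtain ⟨i, x, rfl⟩ := hsurj z
    exact ⟨⟨i, x⟩, rfl⟩

namespace CTop

variable {κ : Cardinal.{u}}

noncomputable abbrev top (κ : Cardinal.{u}) : {ξ : Ordinal.{u} // ξ ≤ κ.ord} :=
  ⟨κ.ord, le_rfl⟩

theorem lt_ord_of_ne_top {x : {ξ : Ordinal.{u} // ξ ≤ κ.ord}} (hx : x ≠ top κ) :
    x.1 < κ.ord :=
  lt_of_le_of_ne x.2 fun h => hx (Subtype.ext h)

theorem isOpen_of_top_notMem {U : Set {ξ : Ordinal.{u} // ξ ≤ κ.ord}} (hU : top κ ∉ U) :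
    IsOpen[CTop κ] U := by
  rw [← Set.biUnion_of_singleton U]
  refine @isOpen_biUnion _ _ (CTop κ) _ _ fun x hx => ?_
  have hx : x ≠ top κ := fun h => hU (h ▸ hx)
  exact TopologicalSpace.isOpen_generateFrom_of_mem (Or.inl ⟨x, lt_ord_of_ne_top hx, rfl⟩)

theorem isOpen_of_tail_subset {U : Set {ξ : Ordinal.{u} // ξ ≤ κ.ord}}
    (hU : top κ ∈ U → ∃ β < κ.ord, ∀ x, β ≤ x.1 → x ∈ U) :
    IsOpen[CTop κ] U := by
  by_cases htop : top κ ∈ U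
  · obtain ⟨β, hβ, htail⟩ := hU htop
    rw [← Set.union_sdiff_cancel (show {x | β ≤ x.1} ⊆ U from htail)]
    exact @IsOpen.union _ _ _ (CTop κ)
      (TopologicalSpace.isOpen_generateFrom_of_mem (Or.inr ⟨β, hβ, rfl⟩))
      (isOpen_of_top_notMem fun h => h.2 hβ.le)
  · exact isOpen_of_top_notMem htop

theorem continuous_of_le_self
    {f : {ξ : Ordinal.{u} // ξ ≤ κ.ord} → {ξ : Ordinal.{u} // ξ ≤ κ.ord}} (hf : ∀ x, x ≤ f x) :
    Continuous[CTop κ, CTop κ] f := by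
  have hftop : f (top κ) = top κ := le_antisymm (f (top κ)).2 (hf (top κ))
  refine continuous_generateFrom_iff.mpr ?_
  rintro V (⟨y, hy, rfl⟩ | ⟨β, hβ, rfl⟩)
  · refine isOpen_of_top_notMem fun h => hy.ne ?_
    rw [Set.mem_preimage, hftop, Set.mem_singleton_iff] at h
    exact congrArg Subtype.val h.symm
  · exact isOpen_of_tail_subset fun _ => ⟨β, hβ, fun x hx => hx.trans (hf x)⟩

theorem isOpen_of_forall_continuous_isOpen_preimage
    {τ : TopologicalSpace {ξ : Ordinal.{u} // ξ ≤ κ.ord}} (htop : ¬ IsOpen[τ] {top κ})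
    {U : Set {ξ : Ordinal.{u} // ξ ≤ κ.ord}}
    (hU : ∀ f, Continuous[CTop κ, CTop κ] f → IsOpen[τ] (f ⁻¹' U)) :
    IsOpen[CTop κ] U := by
  refine isOpen_of_tail_subset fun htopU => ?_
  by_contra! hno
  have hescape : ∀ x, x ≠ top κ → ∃ y, x ≤ y ∧ y ∉ U := fun x hx =>
    hno x.1 (lt_ord_of_ne_top hx)
  choose g hg_le hg_notMem using hescape
  let f : {ξ : Ordinal.{u} // ξ ≤ κ.ord} → {ξ : Ordinal.{u} // ξ ≤ κ.ord} := fun x =>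
    if hx : x = top κ then x else g x hx
  have hf_le : ∀ x, x ≤ f x := fun x => by
    by_cases hx : x = top κ
    · simp only [f, dif_pos hx, le_rfl]
    · simpa only [f, dif_neg hx] using hg_le x hx
  have hpre : f ⁻¹' U = {top κ} := by
    ext x
    by_cases hx : x = top κ
    · subst hx
      simpa [f] using htopU
    · simpa [f, dif_neg hx, hx] using hg_notMem x hx
  exact htop (hpre ▸ hU f (continuous_of_le_self hf_le))

end CTop

theorem statement13_general (κ : Cardinal.{u})
    (τ : TopologicalSpace {ξ : Ordinal.{u} // ξ ≤ κ.ord}) (hfine : τ ≤ CTop κ)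
    (htop : ¬ @IsOpen _ τ {(⟨κ.ord, le_refl κ.ord⟩ : {ξ : Ordinal.{u} // ξ ≤ κ.ord})}) :
    ∃ (I : Type (u + 1))
      (q : (Σ _ : I, {ξ : Ordinal.{u} // ξ ≤ κ.ord}) → {ξ : Ordinal.{u} // ξ ≤ κ.ord}),
      @IsQuotientMap _ _
        (sigmaTop (fun _ : I => {ξ : Ordinal.{u} // ξ ≤ κ.ord}) (fun _ => τ))
        (CTop κ) q :=
  ⟨ULift.{u + 1} {f : {ξ : Ordinal.{u} // ξ ≤ κ.ord} → {ξ : Ordinal.{u} // ξ ≤ κ.ord} //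
      Continuous[CTop κ, CTop κ] f}, _,
    isQuotientMap_sigmaTop_of_forall τ (CTop κ) (fun f => f.down.1)
      (fun x => ⟨.up ⟨id, @continuous_id _ (CTop κ)⟩, x, rfl⟩)
      (fun f => continuous_le_dom hfine f.down.2)
      (fun _ hU => CTop.isOpen_of_forall_continuous_isOpen_preimage htop
        fun f hf => hU (.up ⟨f, hf⟩))⟩

/-- For an infinite regular cardinal `κ` and any topology `τ` finer
than that of `C_κ` in which the top point is not isolated, `C_κ` is a quotient of a
topological sum of copies of `(C_κ, τ)`, i.e. `C_κ` lies in the coreflective hull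
of `(C_κ, τ)` in `Top`. -/
theorem statement13 (κ : Cardinal.{u}) (hκ : Cardinal.aleph0 ≤ κ) (hreg : κ.IsRegular)
    (τ : TopologicalSpace {ξ : Ordinal.{u} // ξ ≤ κ.ord}) (hfine : τ ≤ CTop κ)
    (htop : ¬ @IsOpen _ τ {(⟨κ.ord, le_refl κ.ord⟩ : {ξ : Ordinal.{u} // ξ ≤ κ.ord})}) :
    ∃ (I : Type (u + 1))
      (q : (Σ _ : I, {ξ : Ordinal.{u} // ξ ≤ κ.ord}) → {ξ : Ordinal.{u} // ξ ≤ κ.ord}),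
      @IsQuotientMap _ _
        (sigmaTop (fun _ : I => {ξ : Ordinal.{u} // ξ ≤ κ.ord}) (fun _ => τ))
        (CTop κ) q :=
  statement13_general κ τ hfine htop
end

section
/- Let X be a zero-dimensional topological space (the clopen subsets of X form a basis of its topology) and let α be a cardinal such that: there exists a family of open subsets of X indexed by a set of cardinality α whose intersection is not open, while the intersection of every family of open subsets of X indexed by a set of cardinality strictly less than α is open. Then there exist a topology τ on the underlying set of C_α which is finer than the topology of C_α and in which the top point is not isolated (so Y = (underlying set of C_α, τ) is a prime space), and a quotient map q : X → Y. -/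
open Topology

universe u v w

/-!
Pick a point `a` at which the given intersection of `α` open sets is not a neighbourhood, shrink
each set to a clopen neighbourhood of `a`, and index the family by the ordinals below `α.ord`.
The indices at which the partial intersections actually drop still number at least `α`, since
an intersection over fewer of them would be open; so they can be re-enumerated by `α.ord`,
giving a chain of clopen sets whose partial intersections strictly decrease. Sending `x` to the
first index of the chain it leaves is the quotient map: its fibres over `ξ < α.ord` and the
preimages of tails are intersections of fewer than `α` clopen sets, hence open, while the fibre
over the top point is the whole intersection, which is not open.
-/

open Cardinal Set

section SmallIntersections

variable {X : Type u} [TopologicalSpace X] {α : Cardinal.{u}}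

theorem isOpen_iInter_of_lift_mk_lt
    (hsmall : ∀ (ι : Type u) (U : ι → Set X), #ι < α → (∀ i, IsOpen (U i)) →
      IsOpen (⋂ i, U i))
    {κ : Type v} {U : κ → Set X} (hκ : lift.{u} #κ < lift.{v} α) (hU : ∀ i, IsOpen (U i)) :
    IsOpen (⋂ i, U i) := by
  obtain ⟨c, hc⟩ := mem_range_lift_of_le hκ.le
  obtain ⟨e⟩ := lift_mk_eq'.mp (show lift.{v} #c.out = lift.{u} #κ by rw [mk_out, hc])
  rw [← e.surjective.iInter_comp]
  refine hsmall _ _ ?_ fun i => hU (e i)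
  rwa [mk_out, ← lift_lt.{u, v}, hc]

theorem isOpen_biInter_Iio
    (hsmall : ∀ (ι : Type u) (U : ι → Set X), #ι < α → (∀ i, IsOpen (U i)) →
      IsOpen (⋂ i, U i))
    {ξ : Ordinal.{u}} (hξ : ξ < α.ord) {W : Ordinal.{u} → Set X}
    (hW : ∀ η < ξ, IsOpen (W η)) : IsOpen (⋂ η < ξ, W η) := by
  rw [← iInter_subtype (· < ξ) fun η => W η]
  refine isOpen_iInter_of_lift_mk_lt hsmall ?_ fun η => hW η η.2
  change lift.{u} #(Iio ξ) < _
  rw [mk_Iio_ordinal, lift_lift, lift_lt, ← lt_ord]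
  exact hξ

end SmallIntersections

section ExitIndex

variable {X : Type u} {W : Ordinal.{u} → Set X} {o ξ : Ordinal.{u}} {x : X}

noncomputable def exitIndex (W : Ordinal.{u} → Set X) (o : Ordinal.{u}) (x : X) : Ordinal.{u} :=
  sInf {ξ | o ≤ ξ ∨ x ∉ W ξ}

theorem exitIndex_le : exitIndex W o x ≤ o :=
  csInf_le' (Or.inl le_rfl)

theorem le_exitIndex_iff (hξ : ξ ≤ o) : ξ ≤ exitIndex W o x ↔ x ∈ ⋂ η < ξ, W η := by
  rw [exitIndex, le_csInf_iff' ⟨o, Or.inl le_rfl⟩, mem_iInter₂]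
  constructor
  · intro h η hη
    by_contra hx
    exact (h (Or.inr hx)).not_gt hη
  · rintro h η (hoη | hx)
    · exact hξ.trans hoη
    · by_contra! hηξ
      exact hx (h η hηξ)

theorem exitIndex_eq_iff (hξ : ξ < o) : exitIndex W o x = ξ ↔ x ∈ (⋂ η < ξ, W η) \ W ξ := by
  have hsucc : x ∈ ⋂ η < Order.succ ξ, W η ↔ x ∈ (⋂ η < ξ, W η) ∩ W ξ := by
    simp only [mem_iInter₂, mem_inter_iff, Order.lt_succ_iff, le_iff_lt_or_eq, or_imp,
      forall_and, forall_eq]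
  rw [le_antisymm_iff, ← not_lt, ← Order.succ_le_iff, le_exitIndex_iff hξ.le,
    le_exitIndex_iff (Order.succ_le_of_lt hξ), hsucc, mem_inter_iff, mem_sdiff]
  tauto

theorem exitIndex_eq_self_iff : exitIndex W o x = o ↔ x ∈ ⋂ η < o, W η := by
  rw [← le_exitIndex_iff le_rfl, le_antisymm_iff, and_iff_right exitIndex_le]

end ExitIndex

section ExitMap

variable {X : Type u} {W : Ordinal.{u} → Set X} {o : Ordinal.{u}}

noncomputable def exitMap (W : Ordinal.{u} → Set X) (o : Ordinal.{u}) (x : X) :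
    {ξ : Ordinal.{u} // ξ ≤ o} :=
  ⟨exitIndex W o x, exitIndex_le⟩

theorem exitMap_surjective (hdrop : ∀ ξ < o, ((⋂ η < ξ, W η) \ W ξ).Nonempty)
    (hne : (⋂ η < o, W η).Nonempty) : Function.Surjective (exitMap W o) := by
  rintro ⟨ξ, hξ⟩
  rcases hξ.lt_or_eq with hlt | rfl
  · obtain ⟨x, hx⟩ := hdrop ξ hlt
    exact ⟨x, Subtype.ext ((exitIndex_eq_iff hlt).2 hx)⟩
  · obtain ⟨x, hx⟩ := hne
    exact ⟨x, Subtype.ext (exitIndex_eq_self_iff.2 hx)⟩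

theorem exitMap_preimage_top :
    exitMap W o ⁻¹' {⟨o, le_rfl⟩} = ⋂ η < o, W η := by
  ext x
  simp only [mem_preimage, mem_singleton_iff, Subtype.ext_iff]
  exact exitIndex_eq_self_iff

variable [TopologicalSpace X] {α : Cardinal.{u}}

theorem coinduced_exitMap_le_CTop
    (hsmall : ∀ (ι : Type u) (U : ι → Set X), #ι < α → (∀ i, IsOpen (U i)) →
      IsOpen (⋂ i, U i))
    (hclopen : ∀ ξ < α.ord, IsClopen (W ξ)) :
    TopologicalSpace.coinduced (exitMap W α.ord) ‹_› ≤ CTop α := by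
  have hopen : ∀ ξ < α.ord, IsOpen (⋂ η < ξ, W η) := fun ξ hξ =>
    isOpen_biInter_Iio hsmall hξ fun η hη => (hclopen η (hη.trans hξ)).isOpen
  refine le_generateFrom ?_
  rintro s (⟨y, hy, rfl⟩ | ⟨β, hβ, rfl⟩) <;> rw [isOpen_coinduced]
  · have hfiber : exitMap W α.ord ⁻¹' {y} = (⋂ η < y.1, W η) \ W y.1 := by
      ext x
      simp only [mem_preimage, mem_singleton_iff, Subtype.ext_iff]
      exact exitIndex_eq_iff hy
    rw [hfiber]
    exact (hopen _ hy).sdiff (hclopen _ hy).isClosed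
  · have htail : exitMap W α.ord ⁻¹' {y | β ≤ y.1} = ⋂ η < β, W η := by
      ext x
      exact le_exitIndex_iff hβ.le
    rw [htail]
    exact hopen β hβ

end ExitMap

theorem exists_strictMono_image_Iio_ord_eq {α : Cardinal.{u}} {s : Set Ordinal.{u}}
    (hs : s ⊆ Iio α.ord) (hcard : lift.{u + 1} α ≤ #s) :
    ∃ e : Ordinal.{u} → Ordinal.{u}, StrictMono e ∧ e '' Iio α.ord = s := by
  have hub : ¬ BddAbove (s ∪ Ici α.ord) := fun h =>
    not_bddAbove_Ici α.ord (h.mono subset_union_right)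
  set e := Ordinal.enumOrd (s ∪ Ici α.ord)
  have he : StrictMono e := Ordinal.enumOrd_strictMono hub
  have hlt : ∀ ξ < α.ord, e ξ < α.ord := by
    intro ξ hξ
    by_contra! hle
    have hsub : s ⊆ e '' Iio ξ := by
      intro t ht
      obtain ⟨ζ, rfl⟩ := Ordinal.enumOrd_surjective hub (Or.inl ht)
      exact ⟨ζ, he.lt_iff_lt.1 ((hs ht).trans_le hle), rfl⟩
    have hs_lt : #s < lift.{u + 1} α := by
      calc #s ≤ #(e '' Iio ξ) := mk_le_mk_of_subset hsub
        _ ≤ #(Iio ξ) := mk_image_le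
        _ < lift.{u + 1} α := by rwa [mk_Iio_ordinal, lift_lt, ← lt_ord]
    exact hs_lt.not_ge hcard
  refine ⟨e, he, Subset.antisymm ?_ fun t ht => ?_⟩
  · rintro _ ⟨ξ, hξ, rfl⟩
    exact (Ordinal.enumOrd_mem hub ξ).resolve_right (hlt ξ hξ).not_ge
  · obtain ⟨ζ, rfl⟩ := Ordinal.enumOrd_surjective hub (Or.inl ht)
    exact ⟨ζ, he.le_apply.trans_lt (hs ht), rfl⟩

section DropIndices

variable {X : Type u} {W : Ordinal.{u} → Set X} {o : Ordinal.{u}}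

def dropIndices (W : Ordinal.{u} → Set X) (o : Ordinal.{u}) : Set Ordinal.{u} :=
  {ξ | ξ < o ∧ ((⋂ η < ξ, W η) \ W ξ).Nonempty}

theorem biInter_dropIndices : ⋂ ξ ∈ dropIndices W o, W ξ = ⋂ ξ < o, W ξ := by
  refine Subset.antisymm (fun x hx => ?_) (iInter₂_mono' fun ξ hξ => ⟨ξ, hξ.1, le_rfl⟩)
  rw [mem_iInter₂] at hx ⊢
  intro ζ
  induction ζ using WellFoundedLT.induction with
  | _ ζ ih =>
    intro hζ
    have hlt : x ∈ ⋂ η < ζ, W η := mem_iInter₂.2 fun η hη => ih η hη (hη.trans hζ)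
    by_contra hxζ
    exact hxζ (hx ζ ⟨hζ, x, hlt, hxζ⟩)

variable [TopologicalSpace X] {α : Cardinal.{u}}

theorem lift_le_mk_dropIndices
    (hsmall : ∀ (ι : Type u) (U : ι → Set X), #ι < α → (∀ i, IsOpen (U i)) →
      IsOpen (⋂ i, U i))
    (hopen : ∀ ξ < α.ord, IsOpen (W ξ)) (hW : ¬ IsOpen (⋂ ξ < α.ord, W ξ)) :
    lift.{u + 1} α ≤ #(dropIndices W α.ord) := by
  by_contra! h
  apply hW
  rw [← biInter_dropIndices, biInter_eq_iInter]
  exact isOpen_iInter_of_lift_mk_lt hsmall (by rwa [lift_id'.{u, u + 1}]) fun ξ => hopen _ ξ.2.1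

theorem exists_isClopen_strictDrop
    (hsmall : ∀ (ι : Type u) (U : ι → Set X), #ι < α → (∀ i, IsOpen (U i)) →
      IsOpen (⋂ i, U i))
    (hclopen : ∀ ξ < α.ord, IsClopen (W ξ)) (hW : ¬ IsOpen (⋂ ξ < α.ord, W ξ)) :
    ∃ W' : Ordinal.{u} → Set X, (∀ ξ < α.ord, IsClopen (W' ξ)) ∧
      (∀ ξ < α.ord, ((⋂ η < ξ, W' η) \ W' ξ).Nonempty) ∧ ¬ IsOpen (⋂ ξ < α.ord, W' ξ) := by
  obtain ⟨e, he, himage⟩ :=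
    exists_strictMono_image_Iio_ord_eq (s := dropIndices W α.ord) (fun _ hξ => hξ.1)
    (lift_le_mk_dropIndices hsmall (fun ξ hξ => (hclopen ξ hξ).isOpen) hW)
  have hdrop : ∀ ξ < α.ord, e ξ ∈ dropIndices W α.ord := fun ξ hξ =>
    himage ▸ mem_image_of_mem e hξ
  refine ⟨W ∘ e, fun ξ hξ => hclopen _ (hdrop ξ hξ).1, fun ξ hξ => ?_, ?_⟩
  · obtain ⟨x, hx, hxW⟩ := (hdrop ξ hξ).2
    exact ⟨x, mem_iInter₂.2 fun η hη => mem_iInter₂.1 hx (e η) (he hη), hxW⟩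
  · rwa [← biInter_dropIndices, ← himage, biInter_image] at hW

end DropIndices

theorem exists_isClopen_not_isOpen_iInter {X : Type*} [TopologicalSpace X] {ι : Sort*}
    (hzd : ∀ (U : Set X) (x : X), IsOpen U → x ∈ U → ∃ V : Set X, IsClopen V ∧ x ∈ V ∧ V ⊆ U)
    {U : ι → Set X} (hU : ∀ i, IsOpen (U i)) (hUn : ¬ IsOpen (⋂ i, U i)) :
    ∃ V : ι → Set X, (∀ i, IsClopen (V i)) ∧ ¬ IsOpen (⋂ i, V i) := by
  obtain ⟨a, ha, hna⟩ : ∃ a ∈ ⋂ i, U i, ⋂ i, U i ∉ 𝓝 a := by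
    simpa [isOpen_iff_mem_nhds] using hUn
  choose V hV haV hVU using fun i => hzd (U i) a (hU i) (mem_iInter.1 ha i)
  refine ⟨V, hV, fun hopen => hna ?_⟩
  exact Filter.mem_of_superset (hopen.mem_nhds (mem_iInter.2 haV)) (iInter_mono hVU)

theorem exists_reindex_Iio_ord {X : Type*} {ι : Type u} {α : Cardinal.{u}} (V : ι → Set X)
    (hι : #ι = α) :
    ∃ W : Ordinal.{u} → Set X, (∀ ξ < α.ord, ∃ i, W ξ = V i) ∧ ⋂ ξ < α.ord, W ξ = ⋂ i, V i := by
  obtain ⟨e⟩ : Nonempty (Iio α.ord ≃ ι) := lift_mk_eq'.1 (by simp [hι])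
  refine ⟨fun ξ => if h : ξ < α.ord then V (e ⟨ξ, h⟩) else univ, fun ξ hξ => ⟨_, dif_pos hξ⟩, ?_⟩
  calc ⋂ ξ < α.ord, (if h : ξ < α.ord then V (e ⟨ξ, h⟩) else univ)
      = ⋂ (ξ) (h : ξ < α.ord), V (e ⟨ξ, h⟩) := iInter₂_congr fun ξ h => dif_pos h
    _ = ⋂ i, V (e i) := (iInter_subtype (· ∈ Iio α.ord) fun i => V (e i)).symm
    _ = ⋂ i, V i := e.surjective.iInter_comp V

/-- Let `X` be zero-dimensional and `α` the least cardinal admitting a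
family of `α` open sets with non-open intersection (intersections of fewer than `α`
open sets being open). Then there is a prime topology `τ` finer than `C_α` (with the
top point non-isolated) and a quotient map `q : X → (C_α, τ)`. -/
theorem statement15 {X : Type u} [tX : TopologicalSpace X]
    (hzd : ∀ (U : Set X) (x : X), IsOpen U → x ∈ U →
      ∃ V : Set X, IsClopen V ∧ x ∈ V ∧ V ⊆ U)
    (α : Cardinal.{u})
    (hbig : ∃ (ι : Type u) (U : ι → Set X), Cardinal.mk ι = α ∧
      (∀ i, IsOpen (U i)) ∧ ¬ IsOpen (⋂ i, U i))
    (hsmall : ∀ (ι : Type u) (U : ι → Set X), Cardinal.mk ι < α →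
      (∀ i, IsOpen (U i)) → IsOpen (⋂ i, U i)) :
    ∃ τ : TopologicalSpace {ξ : Ordinal.{u} // ξ ≤ α.ord},
      τ ≤ CTop α ∧
      ¬ @IsOpen _ τ {(⟨α.ord, le_refl α.ord⟩ : {ξ : Ordinal.{u} // ξ ≤ α.ord})} ∧
      ∃ q : X → {ξ : Ordinal.{u} // ξ ≤ α.ord}, @IsQuotientMap _ _ tX τ q := by
  obtain ⟨ι, U, hι, hU, hUn⟩ := hbig
  obtain ⟨V, hV, hVn⟩ := exists_isClopen_not_isOpen_iInter hzd hU hUn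
  obtain ⟨W, hWV, hWeq⟩ := exists_reindex_Iio_ord V hι
  have hWclopen : ∀ ξ < α.ord, IsClopen (W ξ) := fun ξ hξ => by
    obtain ⟨i, hi⟩ := hWV ξ hξ
    exact hi ▸ hV i
  obtain ⟨W', hclopen, hdrop, hW'⟩ := exists_isClopen_strictDrop hsmall hWclopen (hWeq ▸ hVn)
  have hne : (⋂ ξ < α.ord, W' ξ).Nonempty :=
    nonempty_iff_ne_empty.2 fun h => hW' (h ▸ isOpen_empty)
  let τ := TopologicalSpace.coinduced (exitMap W' α.ord) tX
  refine ⟨τ, coinduced_exitMap_le_CTop hsmall hclopen, ?_, exitMap W' α.ord,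
    ⟨⟨rfl⟩, exitMap_surjective hdrop hne⟩⟩
  rwa [isOpen_coinduced, exitMap_preimage_top]
end

section
/- Let f : X → Y be a surjective continuous map which is inducing (the topology of X is the initial topology with respect to f), let b ∈ Y and suppose f⁻¹({b}) = {a} for some a ∈ X. Then every map g : Y → X satisfying f ∘ g = id_Y is continuous as a map from the prime factor Y_b to the prime factor X_a, and X_a belongs to the coreflective hull of Y_b in Top: there exist an index type I and a quotient map from the topological sum of I copies of Y_b onto X_a. -/
open Topology

universe u v w

/-!
Sections `g` of `f` (maps with `f ∘ g = id`) satisfy `g b = a`, and since `X` carries the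
initial topology, `g` is continuous at `b`; this is exactly continuity `Y_b → X_a`.
Conversely, let `U ∋ a` have `g ⁻¹' U` a neighbourhood of `b` for every section `g`.
Choosing a section that leaves `U` at every fibre not contained in `U` shows that `U`
contains `f ⁻¹' V` for a neighbourhood `V` of `b`, so `U` is a neighbourhood of `a`.
Hence `X_a` carries the final topology of all sections, and as every point lies on some
section, the sections assemble to a quotient map from a sum of copies of `Y_b`.
-/

open Filter Function TopologicalSpace

theorem isQuotientMap_sigmaTop_iff {ι : Type v} {Y : ι → Type w} {X : Type*}
    (t : ∀ i, TopologicalSpace (Y i)) (tX : TopologicalSpace X) (g : ∀ i, Y i → X) :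
    @IsQuotientMap _ _ (sigmaTop Y t) tX (fun p => g p.1 p.2) ↔
      tX = (⨆ i, coinduced (g i) (t i)) ∧ Surjective (fun p : Σ i, Y i => g p.1 p.2) := by
  rw [@isQuotientMap_iff _ _ (sigmaTop Y t) tX, @isCoinducing_iff' _ _ (sigmaTop Y t) tX,
    sigmaTop, coinduced_iSup]
  simp only [coinduced_compose]
  rfl

variable {X : Type u} {Y : Type v} {f : X → Y} {g : Y → X}

theorem apply_eq_of_preimage_singleton_eq {a : X} {b : Y} (hfib : f ⁻¹' {b} = {a})
    (hg : f ∘ g = id) : g b = a :=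
  hfib.subset (congrFun hg b : f (g b) = b)

theorem exists_comp_eq_id_apply_eq (hf : Surjective f) (x : X) :
    ∃ g : Y → X, f ∘ g = id ∧ g (f x) = x := by
  classical
  refine ⟨update (surjInv hf) (f x) x, funext fun y => ?_, update_self ..⟩
  rcases eq_or_ne y (f x) with rfl | hy
  · simp
  · simp [hy, surjInv_eq hf]

theorem exists_comp_eq_id_subset_of_mem (hf : Surjective f) (U : Set X) :
    ∃ g : Y → X, f ∘ g = id ∧ ∀ y, g y ∈ U → f ⁻¹' {y} ⊆ U := by
  have hchoice : ∀ y, ∃ x, f x = y ∧ (x ∈ U → f ⁻¹' {y} ⊆ U) := by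
    intro y
    by_cases hy : f ⁻¹' {y} ⊆ U
    · obtain ⟨x, hx⟩ := hf y
      exact ⟨x, hx, fun _ => hy⟩
    · obtain ⟨x, hx, hxU⟩ := Set.not_subset.1 hy
      exact ⟨x, hx, fun h => absurd h hxU⟩
  choose g hfg hgU using hchoice
  exact ⟨g, funext hfg, hgU⟩

section PrimeFactor

variable [tX : TopologicalSpace X] [tY : TopologicalSpace Y]

theorem continuous_primeFactor_iff_tendsto {a : X} {b : Y} {g : Y → X} (hg : g b = a) :
    Continuous[primeFactor tY b, primeFactor tX a] g ↔ Tendsto g (𝓝 b) (𝓝 a) := by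
  subst hg
  rw [continuous_def]
  exact ⟨fun h U hU => h U (fun _ => hU) (mem_of_mem_nhds hU :), fun h U hU hb => h (hU hb)⟩

theorem Topology.IsInducing.continuous_primeFactor_of_comp_eq_id (hf : IsInducing f)
    {a : X} {b : Y} (hfib : f ⁻¹' {b} = {a}) (hg : f ∘ g = id) :
    Continuous[primeFactor tY b, primeFactor tX a] g := by
  have hgb := apply_eq_of_preimage_singleton_eq hfib hg
  rw [continuous_primeFactor_iff_tendsto hgb]
  have hfa : f a = b := hfib.symm.subset rfl
  rw [hf.tendsto_nhds_iff, hg, hfa]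
  exact tendsto_id

theorem Topology.IsInducing.primeFactor_eq_iSup_coinduced (hf : IsInducing f)
    (hsurj : Surjective f) {a : X} {b : Y} (hfib : f ⁻¹' {b} = {a}) :
    primeFactor tX a =
      ⨆ g : {g : Y → X // f ∘ g = id}, coinduced g.1 (primeFactor tY b) := by
  refine le_antisymm (fun U hU haU => ?_) (iSup_le fun g => continuous_iff_coinduced_le.1
    (hf.continuous_primeFactor_of_comp_eq_id hfib g.2))
  obtain ⟨g, hg, hgU⟩ := exists_comp_eq_id_subset_of_mem hsurj U
  have hgb := apply_eq_of_preimage_singleton_eq hfib hg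
  have hpre : g ⁻¹' U ∈ 𝓝 b := isOpen_iSup_iff.1 hU ⟨g, hg⟩ (show g b ∈ U from hgb ▸ haU)
  have hfa : f a = b := hfib.symm.subset rfl
  rw [hf.nhds_eq_comap, hfa]
  exact mem_comap.2 ⟨g ⁻¹' U, hpre, fun x hx => hgU (f x) hx rfl⟩

end PrimeFactor

theorem statement16_general {X Y : Type u} (tX : TopologicalSpace X) (tY : TopologicalSpace Y)
    (f : X → Y) (hsurj : Function.Surjective f)
    (hind : tX = TopologicalSpace.induced f tY)
    (a : X) (b : Y) (hfib : f ⁻¹' {b} = {a}) :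
    (∀ g : Y → X, f ∘ g = id →
      @Continuous Y X (primeFactor tY b) (primeFactor tX a) g) ∧
    ∃ (I : Type u) (q : (Σ _ : I, Y) → X),
      @IsQuotientMap _ _ (sigmaTop (fun _ : I => Y) (fun _ => primeFactor tY b))
        (primeFactor tX a) q := by
  have hf : IsInducing f := ⟨hind⟩
  refine ⟨fun g hg => hf.continuous_primeFactor_of_comp_eq_id hfib hg,
    {g : Y → X // f ∘ g = id}, fun p => p.1.1 p.2,
    (isQuotientMap_sigmaTop_iff _ _ _).2 ⟨hf.primeFactor_eq_iSup_coinduced hsurj hfib, ?_⟩⟩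
  intro x
  obtain ⟨g, hg, hgx⟩ := exists_comp_eq_id_apply_eq hsurj x
  exact ⟨⟨⟨g, hg⟩, f x⟩, hgx⟩

/-- If `f : X → Y` is a surjective continuous inducing map with
`f ⁻¹' {b} = {a}`, then every section `g` of `f` is continuous from the prime factor
`Y_b` to the prime factor `X_a`, and `X_a` lies in the coreflective hull of `Y_b` in
`Top` (it is a quotient of a topological sum of copies of `Y_b`). -/
theorem statement16 {X Y : Type u} (tX : TopologicalSpace X) (tY : TopologicalSpace Y)
    (f : X → Y) (hsurj : Function.Surjective f) (hcont : @Continuous X Y tX tY f)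
    (hind : tX = TopologicalSpace.induced f tY)
    (a : X) (b : Y) (hfib : f ⁻¹' {b} = {a}) :
    (∀ g : Y → X, f ∘ g = id →
      @Continuous Y X (primeFactor tY b) (primeFactor tX a) g) ∧
    ∃ (I : Type u) (q : (Σ _ : I, Y) → X),
      @IsQuotientMap _ _ (sigmaTop (fun _ : I => Y) (fun _ => primeFactor tY b))
        (primeFactor tX a) q :=
  statement16_general tX tY f hsurj hind a b hfib
end

section
/- Let 𝒜 be a class of topological spaces closed under homeomorphic copies which contains the two-point indiscrete space, and let 𝒞 ⊆ 𝒜 be closed under homeomorphic copies, closed under binary topological sums, and divisible in 𝒜. If 𝒞 contains a space having a non-isolated point (i.e., a non-discrete space), then 𝒞 contains the two-point indiscrete space. -/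
open Topology

universe u v w

/-!
Glue two copies of a space `X` and send them onto the two-point space by `y ↦ [y = a]` on the
first copy and `y ↦ [y ≠ a]` on the second. Each point of the target pulls back, on one of the
copies, to `{a}`; so if `a` is not isolated, the quotient topology is indiscrete, and divisibility
puts the two-point indiscrete space into any class that contains `X` and `X ⊕ X`.
-/

open Set

section PointSplit

variable {X : Type u} {a : X}

open scoped Classical in
noncomputable def pointSplit (a : X) : X ⊕ X → ULift.{v} Bool :=
  Sum.elim (fun y => ⟨decide (y = a)⟩) (fun y => ⟨!decide (y = a)⟩)

theorem pointSplit_surjective (a : X) : Function.Surjective (pointSplit.{u, v} a) := by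
  rintro ⟨_ | _⟩
  · exact ⟨Sum.inr a, by simp [pointSplit]⟩
  · exact ⟨Sum.inl a, by simp [pointSplit]⟩

theorem isOpen_singleton_of_isOpen_preimage_pointSplit [TopologicalSpace X]
    {U : Set (ULift.{v} Bool)} (hU : IsOpen (pointSplit a ⁻¹' U)) (hU₀ : U ≠ ∅)
    (hU₁ : U ≠ univ) : IsOpen {a} := by
  obtain ⟨hinl, hinr⟩ := isOpen_sum_iff.mp hU
  obtain ⟨b, rfl⟩ : ∃ b, U = {⟨b⟩} := by
    simp only [ne_eq, eq_empty_iff_forall_notMem, eq_univ_iff_forall, ULift.forall,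
      Bool.forall_bool, not_and_or, not_not] at hU₀ hU₁
    rcases hU₀ with h | h <;> rcases hU₁ with h' | h'
    exacts [absurd h h', ⟨false, Set.ext fun ⟨c⟩ => by cases c <;> simp [h, h']⟩,
      ⟨true, Set.ext fun ⟨c⟩ => by cases c <;> simp [h, h']⟩, absurd h h']
  cases b
  · convert hinr using 1
    ext y; by_cases hy : y = a <;> simp [pointSplit, hy]
  · convert hinl using 1
    ext y; by_cases hy : y = a <;> simp [pointSplit, hy]

theorem isQuotientMap_pointSplit [TopologicalSpace X] (ha : ¬IsOpen {a}) :
    @IsQuotientMap _ _ _ ⊤ (pointSplit.{u, v} a) := by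
  refine @IsQuotientMap.mk _ _ _ ⊤ _
    (@IsCoinducing.mk _ _ _ ⊤ _ (le_top.antisymm' fun U hU => ?_)) (pointSplit_surjective a)
  rw [TopologicalSpace.isOpen_top_iff]
  by_contra h
  rw [not_or] at h
  exact ha (isOpen_singleton_of_isOpen_preimage_pointSplit hU h.1 h.2)

end PointSplit

theorem statement17_general (𝒜 𝒞 : SpaceClass.{u})
    (hA2 : 𝒜 (ULift.{u} Bool) ⊤)
    (hCsum : ∀ (X Y : Type u) (tX : TopologicalSpace X) (tY : TopologicalSpace Y),
      𝒞 X tX → 𝒞 Y tY →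
      𝒞 (X ⊕ Y) (TopologicalSpace.coinduced Sum.inl tX ⊔
        TopologicalSpace.coinduced Sum.inr tY))
    (hCdiv : ∀ (X Z : Type u) (tX : TopologicalSpace X) (tZ : TopologicalSpace Z)
      (q : X → Z), 𝒞 X tX → 𝒜 Z tZ → @IsQuotientMap X Z tX tZ q → 𝒞 Z tZ)
    (hnd : ∃ (X : Type u) (tX : TopologicalSpace X), 𝒞 X tX ∧
      ∃ x : X, ¬ @IsOpen X tX {x}) :
    𝒞 (ULift.{u} Bool) ⊤ := by
  obtain ⟨X, tX, hX, a, ha⟩ := hnd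
  exact hCdiv _ _ _ ⊤ (pointSplit a) (hCsum X X tX tX hX hX) hA2 (isQuotientMap_pointSplit ha)

/-- If `𝒜` is closed under homeomorphic copies and contains the
two-point indiscrete space, and `𝒞 ⊆ 𝒜` is closed under homeomorphic copies and
binary topological sums and is divisible in `𝒜`, then `𝒞` contains the two-point
indiscrete space as soon as it contains a non-discrete space. -/
theorem statement17 (𝒜 𝒞 : SpaceClass.{u})
    (hAhomeo : ClosedUnderHomeo 𝒜)
    (hA2 : 𝒜 (ULift.{u} Bool) ⊤)
    (hsub : ∀ (X : Type u) (tX : TopologicalSpace X), 𝒞 X tX → 𝒜 X tX)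
    (hChomeo : ClosedUnderHomeo 𝒞)
    (hCsum : ∀ (X Y : Type u) (tX : TopologicalSpace X) (tY : TopologicalSpace Y),
      𝒞 X tX → 𝒞 Y tY →
      𝒞 (X ⊕ Y) (TopologicalSpace.coinduced Sum.inl tX ⊔
        TopologicalSpace.coinduced Sum.inr tY))
    (hCdiv : ∀ (X Z : Type u) (tX : TopologicalSpace X) (tZ : TopologicalSpace Z)
      (q : X → Z), 𝒞 X tX → 𝒜 Z tZ → @IsQuotientMap X Z tX tZ q → 𝒞 Z tZ)
    (hnd : ∃ (X : Type u) (tX : TopologicalSpace X), 𝒞 X tX ∧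
      ∃ x : X, ¬ @IsOpen X tX {x}) :
    𝒞 (ULift.{u} Bool) ⊤ :=
  statement17_general 𝒜 𝒞 hA2 hCsum hCdiv hnd
end

section
/- Let 𝒜 be an epireflective class of topological spaces containing the two-point indiscrete space, let 𝒞 be an AD-class in 𝒜 which contains the two-point indiscrete space, and let A ∈ 𝒜. Then A ∈ 𝒞 if and only if the Kolmogorov quotient of A (the quotient of A by the relation of topological indistinguishability, Mathlib's SeparationQuotient A) belongs to 𝒞. -/
open Topology

universe u v w

/-!
The Kolmogorov quotient `mk : A → A₀` is inducing, so any section `out` of it is continuous and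
embeds `A₀` into `A`; hence `A₀ ∈ 𝒜`, and `A₀ ∈ 𝒞` whenever `A ∈ 𝒞` by divisibility. Conversely,
`A` is a quotient of the sum of `A₀` (mapped by `out`) and, for every `x : A`, a two-point
indiscrete space mapped onto the inseparable pair `{x, out (mk x)}`: if a set has open preimage,
the indiscrete summands make it saturated for inseparability, and the summand `A₀` makes it open.
-/

open Function Set

theorem IsEpireflectiveClass.of_isEmbedding_s18 {𝒜 : SpaceClass.{u}} (h𝒜 : IsEpireflectiveClass 𝒜)
    {X Y : Type u} [tX : TopologicalSpace X] [tY : TopologicalSpace Y] {f : X → Y}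
    (hf : IsEmbedding f) (hY : 𝒜 Y tY) : 𝒜 X tX :=
  h𝒜.homeo _ _ _ _ ⟨hf.toHomeomorph.symm⟩ (h𝒜.subspace Y tY (range f) hY)

namespace SeparationQuotient

variable (X : Type u) [TopologicalSpace X]

noncomputable def out : SeparationQuotient X → X :=
  surjInv surjective_mk

variable {X}

theorem mk_out (x : SeparationQuotient X) : mk (out X x) = x :=
  surjInv_eq surjective_mk x

theorem inseparable_out_mk (x : X) : Inseparable (out X (mk x)) x :=
  mk_eq_mk.1 (mk_out (mk x))

variable (X)

theorem continuous_out : Continuous (out X) :=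
  isInducing_mk.continuous_iff.2 <| by simpa only [comp_def, mk_out] using continuous_id'

theorem isEmbedding_out : IsEmbedding (out X) :=
  LeftInverse.isEmbedding mk_out continuous_mk (continuous_out X)

end SeparationQuotient

open SeparationQuotient

theorem isOpen_top_setOf_cond_mem_iff {X : Type*} {x y : X} {s : Set X} :
    IsOpen[⊤] {b : ULift.{v} Bool | cond b.down x y ∈ s} ↔ (x ∈ s ↔ y ∈ s) := by
  rw [TopologicalSpace.isOpen_top_iff]
  constructor
  · rintro (h | h) <;> simpa using Set.ext_iff.1 h ⟨true⟩ |>.trans (Set.ext_iff.1 h ⟨false⟩).symm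
  · intro h
    by_cases hx : x ∈ s
    · exact .inr <| eq_univ_of_forall fun ⟨b⟩ => by cases b <;> simp [hx, h.1 hx]
    · exact .inl <| eq_empty_of_forall_notMem fun ⟨b⟩ => by cases b <;> simp [hx, mt h.2 hx]

def KolmogorovCover (X : Type u) [TopologicalSpace X] : Option X → Type u
  | none => SeparationQuotient X
  | some _ => ULift.{u} Bool

namespace KolmogorovCover

variable (X : Type u) [TopologicalSpace X]

instance instTopologicalSpace : ∀ i, TopologicalSpace (KolmogorovCover X i)
  | none => inferInstanceAs (TopologicalSpace (SeparationQuotient X))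
  | some _ => ⊤

noncomputable def map : (Σ i, KolmogorovCover X i) → X
  | ⟨none, z⟩ => out X z
  | ⟨some x, b⟩ => cond (ULift.down (α := Bool) b) x (out X (mk x))

theorem isQuotientMap_map : IsQuotientMap (map X) := by
  refine (isQuotientMap_iff _).2 ⟨isCoinducing_iff.2 fun s => ?_, fun x => ⟨⟨some x, ⟨true⟩⟩, rfl⟩⟩
  rw [isOpen_sigma_iff]
  constructor
  · intro hs
    have hsaturated : s = mk ⁻¹' (out X ⁻¹' s) :=
      ext fun x => isOpen_top_setOf_cond_mem_iff.1 (hs (some x))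
    exact hsaturated ▸ continuous_mk.isOpen_preimage _ (hs none)
  · rintro hs (_ | x)
    · exact (continuous_out X).isOpen_preimage s hs
    · exact isOpen_top_setOf_cond_mem_iff.2 ((inseparable_out_mk x).mem_open_iff hs).symm

end KolmogorovCover

theorem statement18_general (𝒜 𝒞 : SpaceClass.{u})
    (hA : IsEpireflectiveClass 𝒜)
    (hC : IsADClass 𝒜 𝒞)
    (hC2 : 𝒞 (ULift.{u} Bool) ⊤)
    (A : Type u) [tA : TopologicalSpace A] (hAA : 𝒜 A tA) :
    𝒞 A tA ↔
      𝒞 (SeparationQuotient A) (inferInstance : TopologicalSpace (SeparationQuotient A))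
    := by
  have hSQ : 𝒜 (SeparationQuotient A) inferInstance := hA.of_isEmbedding_s18 (isEmbedding_out A) hAA
  refine ⟨fun hCA => hC.divisible _ _ _ _ _ hCA hSQ isQuotientMap_mk, fun hCSQ => ?_⟩
  have hCover :
      𝒞 (Σ i, KolmogorovCover A i) (sigmaTop _ (KolmogorovCover.instTopologicalSpace A)) :=
    hC.sums _ _ _ fun | none => hCSQ | some _ => hC2
  -- `sigmaTop` is definitionally Mathlib's topology on sigma types.
  exact hC.divisible _ _ _ _ _ hCover hAA (KolmogorovCover.isQuotientMap_map A)

/-- For an AD-class `𝒞` containing the two-point indiscrete space in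
an epireflective class `𝒜` containing it, a space `A ∈ 𝒜` belongs to `𝒞` iff its
Kolmogorov quotient (T0-reflection) does. -/
theorem statement18 (𝒜 𝒞 : SpaceClass.{u})
    (hA : IsEpireflectiveClass 𝒜)
    (hA2 : 𝒜 (ULift.{u} Bool) ⊤)
    (hC : IsADClass 𝒜 𝒞)
    (hC2 : 𝒞 (ULift.{u} Bool) ⊤)
    (A : Type u) [tA : TopologicalSpace A] (hAA : 𝒜 A tA) :
    𝒞 A tA ↔
      𝒞 (SeparationQuotient A) (inferInstance : TopologicalSpace (SeparationQuotient A)) :=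
  statement18_general 𝒜 𝒞 hA hC hC2 A (tA := tA) hAA
end

section
/- Let 𝒜 be an epireflective class of topological spaces which contains the two-point indiscrete space and contains at least one space that is not indiscrete, and let 𝒞 be an AD-class in 𝒜. Then 𝒞 is hereditary if and only if the class {X ∈ 𝒞 : X is a T0 space} is hereditary. -/
open Topology

universe u v w

/-!
Let `X ∈ 𝒞` fail to be T0, with distinct inseparable points `a`, `b`. The T0 reflection of `X` is
homeomorphic to a set of representatives in `X`, so it lies in `𝒜`, and then in `𝒞` as a quotient
of `X`; hence the image `N` of a subspace `s` in it belongs to `𝒞`. The topology of `s` is pulled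
back from `N`, and `s` is a quotient of the sum of `N` (mapped by a section) with one copy of `X`
for every pair `z, w` of points of `s` with the same image in `N` (mapped by `a ↦ z`, everything
else `↦ w`): since `a` and `b` are inseparable, a set whose preimage is open is a union of fibres.
-/

namespace IsEpireflectiveClass

variable {𝒜 : SpaceClass.{u}} {X : Type u} [TopologicalSpace X]

theorem separationQuotient_mem (hA : IsEpireflectiveClass 𝒜) (hX : 𝒜 X ‹_›) :
    𝒜 (SeparationQuotient X) inferInstance := by
  let σ := Function.surjInv (SeparationQuotient.surjective_mk (X := X))
  have hσ_section : SeparationQuotient.mk ∘ σ = id := funext (Function.surjInv_eq _)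
  have hσ : Continuous σ :=
    SeparationQuotient.isInducing_mk.continuous_iff.2 (hσ_section ▸ continuous_id)
  have hemb : IsEmbedding σ :=
    (Function.rightInverse_surjInv _).isEmbedding SeparationQuotient.continuous_mk hσ
  exact hA.homeo _ _ _ _ ⟨hemb.toHomeomorph.symm⟩ (hA.subspace X _ (Set.range σ) hX)

end IsEpireflectiveClass

namespace IsADClass

variable {𝒜 𝒞 : SpaceClass.{u}} {X S N : Type u}
  [TopologicalSpace X] [TopologicalSpace S] [TopologicalSpace N]

theorem separationQuotient_mem (hC : IsADClass 𝒜 𝒞) (hA : IsEpireflectiveClass 𝒜)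
    (hX : 𝒞 X ‹_›) : 𝒞 (SeparationQuotient X) inferInstance :=
  hC.divisible _ _ _ _ _ hX (hA.separationQuotient_mem (hC.subset _ _ hX))
    SeparationQuotient.isQuotientMap_mk

def fibreSumFamily (X N : Type u) (p : S → N) :
    Option {zw : S × S // p zw.1 = p zw.2} → Type u
  | none => N
  | some _ => X

instance fibreSumFamily.instTopologicalSpace (p : S → N) :
    ∀ o, TopologicalSpace (fibreSumFamily X N p o)
  | none => ‹TopologicalSpace N›
  | some _ => ‹TopologicalSpace X›

open Classical in
noncomputable def fibreSumMap (a : X) {p : S → N} (hp : Function.Surjective p) :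
    (Σ o, fibreSumFamily X N p o) → S
  | ⟨none, c⟩ => Function.surjInv hp c
  | ⟨some zw, x⟩ => if x = a then zw.1.1 else zw.1.2

theorem mem_of_isInducing_of_inseparable (hC : IsADClass 𝒜 𝒞) (hX : 𝒞 X ‹_›) {a b : X}
    (hab : a ≠ b) (hins : Inseparable a b) {p : S → N} (hp : IsInducing p)
    (hsurj : Function.Surjective p) (hN : 𝒞 N ‹_›) (hS : 𝒜 S ‹_›) : 𝒞 S ‹_› := by
  let F := fibreSumMap a hsurj
  have hsum : 𝒞 (Σ o, fibreSumFamily X N p o) inferInstance :=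
    hC.sums _ (fibreSumFamily X N p) inferInstance fun | none => hN | some _ => hX
  have hF_a : ∀ zw, F ⟨some zw, a⟩ = zw.1.1 := fun _ => if_pos rfl
  have hF_ne : ∀ zw (x : X), x ≠ a → F ⟨some zw, x⟩ = zw.1.2 := fun _ _ hx => if_neg hx
  have hF_surj : Function.Surjective F := fun z => ⟨⟨some ⟨(z, z), rfl⟩, a⟩, hF_a _⟩
  have hF_cont : Continuous F := by
    refine continuous_sigma_iff.2 fun
      | none => hp.continuous_iff.2 ?_
      | some zw => hp.continuous_iff.2 ?_
    · exact continuous_id.congr fun c => (Function.surjInv_eq hsurj c).symm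
    · refine (continuous_const (y := p zw.1.2)).congr fun x => ?_
      by_cases hx : x = a
      · subst hx
        exact zw.2.symm.trans (congrArg p (hF_a zw)).symm
      · exact congrArg p (hF_ne zw x hx).symm
  refine hC.divisible _ _ _ _ F hsum hS ⟨.of_isOpen_preimage_iff_isOpen fun U =>
    ⟨fun hU => ?_, fun hU => hF_cont.isOpen_preimage U hU⟩, hF_surj⟩
  rw [isOpen_sigma_iff] at hU
  have hsat : U = p ⁻¹' (Function.surjInv hsurj ⁻¹' U) := by
    ext z
    let zw : {zw : S × S // p zw.1 = p zw.2} :=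
      ⟨(z, Function.surjInv hsurj (p z)), (Function.surjInv_eq hsurj _).symm⟩
    have : F ⟨some zw, a⟩ ∈ U ↔ F ⟨some zw, b⟩ ∈ U := hins.mem_open_iff (hU (some zw))
    rwa [hF_a, hF_ne zw b hab.symm] at this
  rw [hsat]
  exact hp.continuous.isOpen_preimage _ (hU none)

end IsADClass

theorem statement19_general (𝒜 𝒞 : SpaceClass.{u})
    (hA : IsEpireflectiveClass 𝒜)
    (hC : IsADClass 𝒜 𝒞) :
    IsHereditary 𝒞 ↔
      IsHereditary (fun (X : Type u) (tX : TopologicalSpace X) =>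
        𝒞 X tX ∧ @T0Space X tX) := by
  refine ⟨fun h X _ s hs hX => ⟨h X _ s hs hX.1, have := hX.2; inferInstance⟩,
    fun h X _ s hs hX => ?_⟩
  by_cases hT0 : T0Space X
  · exact (h X _ s hs ⟨hX, hT0⟩).1
  obtain ⟨a, b, hins, hab⟩ : ∃ a b : X, Inseparable a b ∧ a ≠ b := by
    simpa [t0Space_iff_inseparable] using hT0
  let N : Set (SeparationQuotient X) := SeparationQuotient.mk '' s
  have hN : 𝒞 N _ := (h _ _ N (hs.image _) ⟨hC.separationQuotient_mem hA hX, inferInstance⟩).1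
  have hp : IsInducing (s.imageFactorization SeparationQuotient.mk) :=
    .of_comp ((SeparationQuotient.continuous_mk.comp continuous_subtype_val).subtype_mk _)
      continuous_subtype_val (SeparationQuotient.isInducing_mk.comp IsInducing.subtypeVal)
  exact hC.mem_of_isInducing_of_inseparable hX hab hins hp Set.imageFactorization_surjective
    hN (hA.subspace X _ s (hC.subset X _ hX))

/-- For an AD-class `𝒞` in an epireflective class `𝒜` that contains
the two-point indiscrete space and some non-indiscrete space, `𝒞` is hereditary iff
the class of T0 members of `𝒞` is hereditary. -/
theorem statement19 (𝒜 𝒞 : SpaceClass.{u})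
    (hA : IsEpireflectiveClass 𝒜)
    (hA2 : 𝒜 (ULift.{u} Bool) ⊤)
    (hAnontriv : ∃ (X : Type u) (tX : TopologicalSpace X), 𝒜 X tX ∧ tX ≠ ⊤)
    (hC : IsADClass 𝒜 𝒞) :
    IsHereditary 𝒞 ↔
      IsHereditary (fun (X : Type u) (tX : TopologicalSpace X) =>
        𝒞 X tX ∧ @T0Space X tX) :=
  statement19_general 𝒜 𝒞 hA hC
end
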